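/- arXiv:math/9501222 — 7 statements merged into one kernel-verified Lean document; each statement's English description precedes it below -/
import Mathlib

section
/- Assume (y_i)_{i∈I} satisfies y_i ∈ A_i and h^j_i(y_j) = y_i for all i ≤ j in I. Define f : M → M by f(x) = x · y_i for x in the copy of F(A_i). Then f is a bijection of M without fixed points which maps each F(A_i) onto itself, preserves each relation R_{i,z} (i.e. (y, w) ∈ R_{i,z} iff (f(y), f(w)) ∈ R_{i,z}), and commutes with the induced homomorphisms: ĥ^j_i(f(x)) = f(ĥ^j_i(x)) for all i ≤ j and all x ∈ F(A_j). Thus f is a fixed-point-free automorphism of the structure 𝔐 = (M, (F(A_i))_{i∈I}, (R_{i,z})_{i∈I, z∈F(A_i)}, (ĥ^j_i)_{i≤j}). -/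
/-!
Right multiplication by `y_i` on each `F(A_i)` is a bijection, and it has no fixed points
because a generator of a free group is not `1`. It commutes with the left multiplications
defining the `R_{i,z}`, and since `ĥ^j_i` is a homomorphism sending `y_j` to `y_i`, it also
commutes with `ĥ^j_i`.
-/

/-- The relation `R_{i,z} = {(y, z·y) : y ∈ F(A_i)}`, viewed as a binary relation on
the disjoint union `M = Σ i, F(A_i)` (supported on the copy of `F(A_i)`). -/
def FG.Rel {I : Type*} {A : I → Type*} (i : I) (z : FreeGroup (A i))
    (m m' : Σ j, FreeGroup (A j)) : Prop :=
  ∃ a : FreeGroup (A i), m = ⟨i, a⟩ ∧ m' = ⟨i, z * a⟩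

/-- The graph of the induced homomorphism `ĥ^j_i : F(A_j) → F(A_i)`, viewed as a
binary relation on the disjoint union `M = Σ k, F(A_k)`:
`HRel h i j hij m m'` says `m ∈ F(A_j)` and `m' = ĥ^j_i(m)`. -/
def FG.HRel {I : Type*} [Preorder I] {A : I → Type*}
    (h : ∀ i j, i ≤ j → A j → A i) (i j : I) (hij : i ≤ j)
    (m m' : Σ k, FreeGroup (A k)) : Prop :=
  ∃ x : FreeGroup (A j), m = ⟨j, x⟩ ∧ m' = ⟨i, FreeGroup.map (h i j hij) x⟩

section SigmaMulRight

variable {ι : Type*} {G : ι → Type*} [∀ i, Group (G i)]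

def sigmaMulRight (g : ∀ i, G i) : (Σ i, G i) ≃ Σ i, G i :=
  Equiv.sigmaCongrRight fun i => Equiv.mulRight (g i)

@[simp]
theorem sigmaMulRight_mk (g : ∀ i, G i) (i : ι) (x : G i) :
    sigmaMulRight g ⟨i, x⟩ = ⟨i, x * g i⟩ :=
  rfl

@[simp]
theorem sigmaMulRight_fst (g : ∀ i, G i) (m : Σ i, G i) : (sigmaMulRight g m).1 = m.1 :=
  rfl

theorem sigmaMulRight_ne_self {g : ∀ i, G i} (hg : ∀ i, g i ≠ 1) (m : Σ i, G i) :
    sigmaMulRight g m ≠ m := by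
  obtain ⟨i, x⟩ := m
  rw [sigmaMulRight_mk, Ne, Sigma.mk.inj_iff, heq_eq_eq, mul_eq_left]
  exact fun h => hg i h.2

end SigmaMulRight

namespace FG

variable {I : Type*} {A : I → Type*}

theorem Rel.sigmaMulRight {i : I} {z : FreeGroup (A i)} {m m' : Σ j, FreeGroup (A j)}
    (g : ∀ j, FreeGroup (A j)) (hr : Rel i z m m') :
    Rel i z (sigmaMulRight g m) (sigmaMulRight g m') := by
  obtain ⟨a, rfl, rfl⟩ := hr
  exact ⟨a * g i, rfl, by rw [sigmaMulRight_mk, mul_assoc]⟩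

theorem rel_sigmaMulRight_iff (g : ∀ j, FreeGroup (A j)) (i : I) (z : FreeGroup (A i))
    (m m' : Σ j, FreeGroup (A j)) :
    Rel i z (sigmaMulRight g m) (sigmaMulRight g m') ↔ Rel i z m m' := by
  refine ⟨fun hr => ?_, Rel.sigmaMulRight g⟩
  have cancel : ∀ n, sigmaMulRight g⁻¹ (sigmaMulRight g n) = n := by
    rintro ⟨j, x⟩
    simp
  simpa only [cancel] using hr.sigmaMulRight g⁻¹

theorem hRel_sigmaMulRight [Preorder I] (h : ∀ i j, i ≤ j → A j → A i)
    {g : ∀ j, FreeGroup (A j)}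
    (hg : ∀ i j (hij : i ≤ j), FreeGroup.map (h i j hij) (g j) = g i)
    (i j : I) (hij : i ≤ j) (x : FreeGroup (A j)) :
    HRel h i j hij (sigmaMulRight g ⟨j, x⟩)
      (sigmaMulRight g ⟨i, FreeGroup.map (h i j hij) x⟩) :=
  ⟨x * g j, rfl, by rw [sigmaMulRight_mk, map_mul, hg]⟩

end FG

theorem stmt5_general {I : Type*} [PartialOrder I]
    {A : I → Type*}
    (h : ∀ i j, i ≤ j → A j → A i)
    (y : ∀ i, A i)
    (hy : ∀ i j (hij : i ≤ j), h i j hij (y j) = y i) :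
    ∃ f : (Σ i, FreeGroup (A i)) → (Σ i, FreeGroup (A i)),
      (∀ i (x : FreeGroup (A i)), f ⟨i, x⟩ = ⟨i, x * FreeGroup.of (y i)⟩) ∧
      Function.Bijective f ∧
      (∀ m, f m ≠ m) ∧
      (∀ m, (f m).1 = m.1) ∧
      (∀ i (z : FreeGroup (A i)) m m', FG.Rel i z m m' ↔ FG.Rel i z (f m) (f m')) ∧
      (∀ i j (hij : i ≤ j) (x : FreeGroup (A j)),
        FG.HRel h i j hij (f ⟨j, x⟩) (f ⟨i, FreeGroup.map (h i j hij) x⟩)) := by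
  let g : ∀ i, FreeGroup (A i) := fun i => FreeGroup.of (y i)
  have hg : ∀ i j (hij : i ≤ j), FreeGroup.map (h i j hij) (g j) = g i := fun i j hij => by
    simp only [g, FreeGroup.map.of, hy]
  exact ⟨sigmaMulRight g, sigmaMulRight_mk g, (sigmaMulRight g).bijective,
    sigmaMulRight_ne_self fun i => FreeGroup.of_ne_one (y i), sigmaMulRight_fst g,
    fun i z m m' => (FG.rel_sigmaMulRight_iff g i z m m').symm, FG.hRel_sigmaMulRight h hg⟩

/-- If `y_i ∈ A_i` with `h^j_i(y_j) = y_i` for `i ≤ j`, then `f(x) = x · y_i`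
(for `x` in the copy of `F(A_i)`) is a fixed-point-free bijection of
`M = Σ i, F(A_i)` mapping each `F(A_i)` onto itself, preserving each relation
`R_{i,z}`, and commuting with the induced homomorphisms `ĥ^j_i`; i.e. `f` is a
fixed-point-free automorphism of the structure `𝔐`. -/
theorem stmt5 {I : Type*} [PartialOrder I] [IsDirected I (· ≤ ·)]
    {A : I → Type*} [∀ i, Nonempty (A i)]
    (h : ∀ i j, i ≤ j → A j → A i)
    (hid : ∀ i (x : A i), h i i le_rfl x = x)
    (hcomp : ∀ i j k (hij : i ≤ j) (hjk : j ≤ k) (x : A k),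
      h i k (le_trans hij hjk) x = h i j hij (h j k hjk x))
    (y : ∀ i, A i)
    (hy : ∀ i j (hij : i ≤ j), h i j hij (y j) = y i) :
    ∃ f : (Σ i, FreeGroup (A i)) → (Σ i, FreeGroup (A i)),
      (∀ i (x : FreeGroup (A i)), f ⟨i, x⟩ = ⟨i, x * FreeGroup.of (y i)⟩) ∧
      Function.Bijective f ∧
      (∀ m, f m ≠ m) ∧
      (∀ m, (f m).1 = m.1) ∧
      (∀ i (z : FreeGroup (A i)) m m', FG.Rel i z m m' ↔ FG.Rel i z (f m) (f m')) ∧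
      (∀ i j (hij : i ≤ j) (x : FreeGroup (A j)),
        FG.HRel h i j hij (f ⟨j, x⟩) (f ⟨i, FreeGroup.map (h i j hij) x⟩)) :=
  stmt5_general h y hy
end

section
/- Let F : M → M be a bijection such that: for every i ∈ I, F maps the copy of F(A_i) into itself; for all i ∈ I, z ∈ F(A_i) and y, w ∈ F(A_i), (y, w) ∈ R_{i,z} implies (F(y), F(w)) ∈ R_{i,z}; and F preserves the graphs of the induced homomorphisms, i.e. ĥ^j_i(F(x)) = F(ĥ^j_i(x)) for all i ≤ j and x ∈ F(A_j). Then, setting w_i = F(1_i) where 1_i is the identity of F(A_i), one has: w_i ∈ F(A_i), F(z) = z · w_i for every z ∈ F(A_i), and ĥ^j_i(w_j) = w_i for all i ≤ j in I. -/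
/-- If `F` is a bijection of `M = Σ i, F(A_i)` mapping each copy `F(A_i)` into
itself, preserving the relations `R_{i,z}` and the graphs of the induced
homomorphisms (`ĥ^j_i(F x) = F(ĥ^j_i x)`), then with `w_i := F(1_i)` one has
`w_i ∈ F(A_i)`, `F(z) = z · w_i` for every `z ∈ F(A_i)`, and
`ĥ^j_i(w_j) = w_i` for all `i ≤ j`. -/
theorem stmt6 {I : Type*} [PartialOrder I] [IsDirected I (· ≤ ·)]
    {A : I → Type*} [∀ i, Nonempty (A i)]
    (h : ∀ i j, i ≤ j → A j → A i)
    (hid : ∀ i (x : A i), h i i le_rfl x = x)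
    (hcomp : ∀ i j k (hij : i ≤ j) (hjk : j ≤ k) (x : A k),
      h i k (le_trans hij hjk) x = h i j hij (h j k hjk x))
    (F : (Σ i, FreeGroup (A i)) → (Σ i, FreeGroup (A i)))
    (hbij : Function.Bijective F)
    (hfib : ∀ m, (F m).1 = m.1)
    (hR : ∀ i (z : FreeGroup (A i)) m m', FG.Rel i z m m' → FG.Rel i z (F m) (F m'))
    (hH : ∀ i j (hij : i ≤ j) (x : FreeGroup (A j)),
      FG.HRel h i j hij (F ⟨j, x⟩) (F ⟨i, FreeGroup.map (h i j hij) x⟩)) :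
    ∃ w : ∀ i, FreeGroup (A i),
      (∀ i, F ⟨i, 1⟩ = ⟨i, w i⟩) ∧
      (∀ i (z : FreeGroup (A i)), F ⟨i, z⟩ = ⟨i, z * w i⟩) ∧
      (∀ i j (hij : i ≤ j), FreeGroup.map (h i j hij) (w j) = w i) := by
  have hw : ∀ i, ∃ a : FreeGroup (A i), F ⟨i, 1⟩ = ⟨i, a⟩ := by
    intro i
    rcases hF : F ⟨i, 1⟩ with ⟨k, a⟩
    have hk := hfib ⟨i, 1⟩
    rw [hF] at hk
    simp only at hk
    subst hk
    exact ⟨a, rfl⟩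
  choose w hw using hw
  refine ⟨w, hw, ?_, ?_⟩
  · intro i z
    obtain ⟨a, h1, h2⟩ := hR i z ⟨i, 1⟩ ⟨i, z⟩ ⟨1, rfl, by simp⟩
    rw [hw i] at h1
    simp only [Sigma.mk.inj_iff, heq_eq_eq, true_and] at h1
    rw [h1]
    exact h2
  · intro i j hij
    obtain ⟨x, h1, h2⟩ := hH i j hij 1
    rw [hw j] at h1
    simp only [Sigma.mk.inj_iff, heq_eq_eq, true_and] at h1
    rw [map_one, hw i] at h2
    simp only [Sigma.mk.inj_iff, heq_eq_eq, true_and] at h2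
    rw [h1, ← h2]
end

section
/- Let A and B be disjoint sets with A nonempty, B infinite, and |A| ≤ |B|, and let S ∈ {A, B}. Then there exists a tree T on A ∪ B that codes A and satisfies Suc_T(⟨⟩) = S, where ⟨⟩ is the empty sequence (the root of T). -/
/-!
The tree is generated along each branch by an automaton. A node is an `A`-node (successor
set `A`) or a `B`-node carrying a bound `b`. The children of an `A`-node `η` are `B`-nodes
with bound `code η`, where `code` injects the finite sequences over `A ∪ B` into `B`
(possible since `|A ∪ B|^{<ω} = |B|`). A child `x` of a `B`-node with bound `b` is a `B`-node
with bound `x` if `x` lies below `b` in a well-order of `X`, and an `A`-node otherwise.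

Bounds strictly decrease along `B`-nodes, so every branch meets `T^A`. By well-founded
induction on the bound, the rank over `T^A` of a `B`-node depends only on its bound, and
it strictly increases with the bound, as a node with bound `b'` has a child with bound `b`
for every `b ∈ B` below `b'`. Hence `rk(η, T^A \ {η})` is the successor of the rank
belonging to the bound `code η`, and it is injective on `T^A` because `code` is.
-/

/-- A tree on `X`: a nonempty set of finite sequences closed under initial segments. -/
def SeqTree.IsTree {X : Type*} (T : Set (List X)) : Prop :=
  T.Nonempty ∧ ∀ η ∈ T, ∀ ν : List X, ν <+: η → ν ∈ T

/-- `Suc_T(η) = {x : η⌢⟨x⟩ ∈ T}`. -/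
def SeqTree.suc {X : Type*} (T : Set (List X)) (η : List X) : Set X :=
  {x | η ++ [x] ∈ T}

/-- The descent relation used to compute the rank `rk(·, A')` in `T`:
`ν` lies below `μ` iff `ν` is a one-step extension of `μ` inside `T` and
`μ ∉ A'` (descent stops upon reaching `A'`).  `rk(η, A') < ∞` for all `η ∈ T`
iff this relation is well-founded, i.e. iff no infinite branch of `T` avoids `A'`. -/
def SeqTree.step {X : Type*} (T A' : Set (List X)) (ν μ : List X) : Prop :=
  ν ∈ T ∧ μ ∉ A' ∧ ∃ x, ν = μ ++ [x]

open Classical in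
/-- The rank `rk(η, A')` of `η` with respect to `A'` (the rank of the converse
tree ordering on the extensions of `η` in `T` avoiding `A'` strictly in between),
defined as an ordinal when it is `< ∞`, i.e. when the descent relation is
well-founded (and junk value `0` otherwise). -/
noncomputable def SeqTree.rk {X : Type*} (T A' : Set (List X)) (η : List X) : Ordinal :=
  if h : WellFounded (SeqTree.step T A') then
    @IsWellFounded.rank _ (SeqTree.step T A') ⟨h⟩ η
  else 0

/-- `T` (a tree on `A ∪ B`) codes `A`: (1) `Suc_T(η) ∈ {A, B}` for all `η ∈ T`;
(2) `rk(η, T^A) < ∞` for all `η ∈ T`, where `T^A = {η ∈ T : Suc_T(η) = A}`;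
(3) `η ↦ rk(η, T^A \ {η})` is injective on `T^A`. -/
def SeqTree.Codes {X : Type*} (T : Set (List X)) (A B : Set X) : Prop :=
  (∀ η ∈ T, SeqTree.suc T η = A ∨ SeqTree.suc T η = B) ∧
  WellFounded (SeqTree.step T {η ∈ T | SeqTree.suc T η = A}) ∧
  Set.InjOn (fun η => SeqTree.rk T ({ν ∈ T | SeqTree.suc T ν = A} \ {η}) η)
    {η ∈ T | SeqTree.suc T η = A}

universe u

open Cardinal Set

namespace SeqTree

variable {X : Type*} {T A' : Set (List X)} {η μ ν : List X}

/-- The set `T^A`. -/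
def nodesWithSuc (T : Set (List X)) (S : Set X) : Set (List X) :=
  {η ∈ T | suc T η = S}

theorem acc_step_of_mem (h : ν ∈ A') : Acc (step T A') ν :=
  ⟨ν, fun _ hμ => absurd h hμ.2.1⟩

theorem acc_step_of_notMem (hT : IsTree T) (h : ν ∉ T) : Acc (step T A') ν :=
  ⟨ν, fun _ ⟨hμ, _, x, hx⟩ => absurd (hT.2 _ hμ ν ⟨[x], hx.symm⟩) h⟩

theorem step_diff_singleton_iff (hne : μ ≠ η) :
    step T (A' \ {η}) ν μ ↔ step T A' ν μ := by
  simp [step, hne]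

theorem acc_step_diff_singleton_of_length_lt (h : Acc (step T A') μ)
    (hlen : η.length < μ.length) : Acc (step T (A' \ {η})) μ := by
  induction h with
  | intro μ _ ih =>
    refine ⟨μ, fun ν hν => ?_⟩
    have hν' := (step_diff_singleton_iff (by rintro rfl; omega)).1 hν
    exact ih ν hν' (by obtain ⟨-, -, x, rfl⟩ := hν'; simp; omega)

theorem wellFounded_step_diff_singleton (hwf : WellFounded (step T A')) (η : List X) :
    WellFounded (step T (A' \ {η})) := by
  have hη : Acc (step T (A' \ {η})) η :=
    ⟨η, fun ν ⟨_, _, x, hx⟩ =>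
      acc_step_diff_singleton_of_length_lt (hwf.apply ν) (by simp [hx])⟩
  refine ⟨fun μ => ?_⟩
  induction μ using hwf.induction with
  | _ μ ih =>
    by_cases hμ : μ = η
    · exact hμ ▸ hη
    · exact ⟨μ, fun ν hν => ih ν ((step_diff_singleton_iff hμ).1 hν)⟩

theorem rk_eq_rank (hwf : WellFounded (step T A')) :
    letI : IsWellFounded _ (step T A') := ⟨hwf⟩
    rk T A' = IsWellFounded.rank (step T A') :=
  funext fun _ => dif_pos hwf

theorem rk_lt_rk_of_step (hwf : WellFounded (step T A')) (h : step T A' ν μ) :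
    rk T A' ν < rk T A' μ := by
  let _ : IsWellFounded _ (step T A') := ⟨hwf⟩
  rw [rk_eq_rank hwf]
  exact IsWellFounded.rank_lt_of_rel h

theorem rk_le_of_forall_step_lt (hwf : WellFounded (step T A')) {o : Ordinal}
    (h : ∀ ν, step T A' ν μ → rk T A' ν < o) : rk T A' μ ≤ o := by
  let _ : IsWellFounded _ (step T A') := ⟨hwf⟩
  rw [rk_eq_rank hwf] at h ⊢
  rw [IsWellFounded.rank_eq]
  exact Ordinal.iSup_le fun ν => Order.succ_le_of_lt (h ν.1 ν.2)

theorem rk_eq_zero_of_mem (h : ν ∈ A') : rk T A' ν = 0 := by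
  by_cases hwf : WellFounded (step T A')
  · exact nonpos_iff_eq_zero.1 (rk_le_of_forall_step_lt hwf fun _ hμ => absurd h hμ.2.1)
  · exact dif_neg hwf

theorem rk_diff_singleton_of_length_lt (hwf : WellFounded (step T A'))
    (hlen : η.length < ν.length) : rk T (A' \ {η}) ν = rk T A' ν := by
  have hwf' := wellFounded_step_diff_singleton hwf η
  induction ν using hwf.induction with
  | _ ν ih =>
    have hchild : ∀ μ, step T A' μ ν → rk T (A' \ {η}) μ = rk T A' μ :=
      fun μ hμ => ih μ hμ (by obtain ⟨-, -, x, rfl⟩ := hμ; simp; omega)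
    have hstep : ∀ μ, step T (A' \ {η}) μ ν ↔ step T A' μ ν :=
      fun _ => step_diff_singleton_iff (by rintro rfl; omega)
    apply le_antisymm
    · refine rk_le_of_forall_step_lt hwf' fun μ hμ => ?_
      rw [hchild μ ((hstep μ).1 hμ)]
      exact rk_lt_rk_of_step hwf ((hstep μ).1 hμ)
    · refine rk_le_of_forall_step_lt hwf fun μ hμ => ?_
      rw [← hchild μ hμ]
      exact rk_lt_rk_of_step hwf' ((hstep μ).2 hμ)

end SeqTree

namespace CodingTree

open SeqTree

variable {X : Type*} (A B : Set X) (r : X → X → Prop) (code : List X → X) (root : Option X)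

noncomputable section

open Classical in
/-- The state `none` marks a node with successor set `A`, the state `some b` a node with
successor set `B` and bound `b`. -/
def next (η : List X) : Option X → X → Option X
  | none, _ => some (code η)
  | some b, x => if r x b then some x else none

def state (η : List X) : Option X :=
  η.reverseRecOn (motive := fun _ => Option X) root fun p x s => next r code p s x

def label : Option X → Set X
  | none => A
  | some _ => B

def tree : Set (List X) :=
  {η | ∀ p x, p ++ [x] <+: η → x ∈ label A B (state r code root p)}

end

variable {A B r code root} {η η' : List X} {x a : X}

local notation "𝒯" => tree A B r code root
local notation "𝒯ᴬ" => nodesWithSuc (tree A B r code root) A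

@[simp]
theorem state_nil : state r code root [] = root := by
  simp [state]

@[simp]
theorem state_concat : state r code root (η ++ [x]) = next r code η (state r code root η) x := by
  simp [state]

theorem concat_mem_tree_iff : η ++ [x] ∈ 𝒯 ↔ η ∈ 𝒯 ∧ x ∈ label A B (state r code root η) := by
  simp only [tree, Set.mem_ofPred_eq, List.prefix_concat_iff]
  refine ⟨fun h => ⟨fun p y hp => h p y (Or.inr hp), h η x (Or.inl rfl)⟩, ?_⟩
  rintro ⟨hη, hx⟩ p y (hp | hp)
  · simp_all
  · exact hη p y hp

theorem nil_mem_tree : [] ∈ 𝒯 := by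
  simp [tree]

theorem isTree : IsTree 𝒯 :=
  ⟨⟨[], nil_mem_tree⟩, fun _ hη _ hν p x hp => hη p x (hp.trans hν)⟩

theorem suc_tree (hη : η ∈ 𝒯) : suc 𝒯 η = label A B (state r code root η) := by
  ext x
  simp [suc, concat_mem_tree_iff, hη]

theorem label_subset_union {s : Option X} : label A B s ⊆ A ∪ B := by
  cases s <;> simp [label]

theorem mem_union_of_mem_tree (hη : η ∈ 𝒯) (hx : x ∈ η) : x ∈ A ∪ B := by
  obtain ⟨s, t, rfl⟩ := List.mem_iff_append.1 hx
  exact label_subset_union (hη s x ⟨t, by simp⟩)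

theorem mem_nodesWithSuc_iff (hAB : A ≠ B) : η ∈ 𝒯ᴬ ↔ η ∈ 𝒯 ∧ state r code root η = none := by
  refine and_congr_right fun hη => ?_
  rw [suc_tree hη]
  cases state r code root η <;> simp [label, hAB.symm]

theorem state_concat_of_none (h : state r code root η = none) :
    state r code root (η ++ [x]) = some (code η) := by
  simp [h, next]

theorem state_concat_of_rel {b : X} (h : state r code root η = some b) (hx : r x b) :
    state r code root (η ++ [x]) = some x := by
  simp [h, next, hx]

theorem state_concat_of_not_rel {b : X} (h : state r code root η = some b) (hx : ¬r x b) :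
    state r code root (η ++ [x]) = none := by
  simp [h, next, hx]

theorem notMem_nodesWithSuc_of_state_eq_some (hAB : A ≠ B) {b : X}
    (h : state r code root η = some b) : η ∉ 𝒯ᴬ :=
  fun hη => Option.some_ne_none b (h.symm.trans ((mem_nodesWithSuc_iff hAB).1 hη).2)

variable [IsWellFounded X r]

theorem wellFounded_step (hAB : A ≠ B) : WellFounded (step 𝒯 𝒯ᴬ) := by
  have hacc : ∀ b μ, state r code root μ = some b → Acc (step 𝒯 𝒯ᴬ) μ := by
    intro b
    induction b using IsWellFounded.wf.induction (r := r) with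
    | _ b ih =>
      refine fun μ hμ => ⟨μ, ?_⟩
      rintro _ ⟨hν, -, x, rfl⟩
      by_cases hx : r x b
      · exact ih x hx _ (state_concat_of_rel hμ hx)
      · exact acc_step_of_mem
          ((mem_nodesWithSuc_iff hAB).2 ⟨hν, state_concat_of_not_rel hμ hx⟩)
  refine ⟨fun μ => ?_⟩
  cases hs : state r code root μ with
  | some b => exact hacc b μ hs
  | none =>
    by_cases hμ : μ ∈ 𝒯
    · exact acc_step_of_mem ((mem_nodesWithSuc_iff hAB).2 ⟨hμ, hs⟩)
    · exact acc_step_of_notMem isTree hμ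

theorem rk_eq_of_state_eq_some (hAB : A ≠ B) {b : X} {μ μ' : List X} (hμ : μ ∈ 𝒯) (hμ' : μ' ∈ 𝒯)
    (hs : state r code root μ = some b) (hs' : state r code root μ' = some b) :
    rk 𝒯 𝒯ᴬ μ = rk 𝒯 𝒯ᴬ μ' := by
  induction b using IsWellFounded.wf.induction (r := r) generalizing μ μ' with
  | _ b ih =>
    suffices h : ∀ μ μ', μ ∈ 𝒯 → μ' ∈ 𝒯 → state r code root μ = some b →
        state r code root μ' = some b → rk 𝒯 𝒯ᴬ μ ≤ rk 𝒯 𝒯ᴬ μ' from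
      (h μ μ' hμ hμ' hs hs').antisymm (h μ' μ hμ' hμ hs' hs)
    intro μ μ' hμ hμ' hs hs'
    refine rk_le_of_forall_step_lt (wellFounded_step hAB) ?_
    rintro _ ⟨hν, -, x, rfl⟩
    have hν' : μ' ++ [x] ∈ 𝒯 := by
      rw [concat_mem_tree_iff] at hν ⊢
      exact ⟨hμ', by simpa [hs, hs'] using hν.2⟩
    have hrk : rk 𝒯 𝒯ᴬ (μ ++ [x]) = rk 𝒯 𝒯ᴬ (μ' ++ [x]) := by
      by_cases hx : r x b
      · exact ih x hx hν hν' (state_concat_of_rel hs hx) (state_concat_of_rel hs' hx)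
      · rw [rk_eq_zero_of_mem, rk_eq_zero_of_mem] <;> rw [mem_nodesWithSuc_iff hAB]
        · exact ⟨hν', state_concat_of_not_rel hs' hx⟩
        · exact ⟨hν, state_concat_of_not_rel hs hx⟩
    rw [hrk]
    exact rk_lt_rk_of_step (wellFounded_step hAB)
      ⟨hν', notMem_nodesWithSuc_of_state_eq_some hAB hs', x, rfl⟩

theorem rk_diff_singleton_self (hAB : A ≠ B) (hη : η ∈ 𝒯ᴬ) (ha : a ∈ A) :
    rk 𝒯 (𝒯ᴬ \ {η}) η = Order.succ (rk 𝒯 𝒯ᴬ (η ++ [a])) := by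
  have hwf : WellFounded (step 𝒯 𝒯ᴬ) := wellFounded_step hAB
  have hwf' := wellFounded_step_diff_singleton hwf η
  obtain ⟨hηT, hs⟩ := (mem_nodesWithSuc_iff hAB).1 hη
  have haT : η ++ [a] ∈ 𝒯 := concat_mem_tree_iff.2 ⟨hηT, by simpa [hs, label]⟩
  have hchild : ∀ x, η ++ [x] ∈ 𝒯 → rk 𝒯 (𝒯ᴬ \ {η}) (η ++ [x]) = rk 𝒯 𝒯ᴬ (η ++ [a]) := by
    intro x hx
    rw [rk_diff_singleton_of_length_lt hwf (by simp)]
    exact rk_eq_of_state_eq_some hAB hx haT (state_concat_of_none hs)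
      (state_concat_of_none hs)
  apply le_antisymm
  · refine rk_le_of_forall_step_lt hwf' ?_
    rintro _ ⟨hν, -, x, rfl⟩
    rw [hchild x hν]
    exact Order.lt_succ _
  · rw [← hchild a haT]
    exact Order.succ_le_of_lt (rk_lt_rk_of_step hwf' ⟨haT, fun h => h.2 rfl, a, rfl⟩)

theorem rk_concat_lt_of_rel (hAB : A ≠ B) (hη : η ∈ 𝒯ᴬ) (hη' : η' ∈ 𝒯ᴬ) (ha : a ∈ A)
    (hcode : code η ∈ B) (hlt : r (code η) (code η')) :
    rk 𝒯 𝒯ᴬ (η ++ [a]) < rk 𝒯 𝒯ᴬ (η' ++ [a]) := by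
  obtain ⟨hηT, hs⟩ := (mem_nodesWithSuc_iff hAB).1 hη
  obtain ⟨hη'T, hs'⟩ := (mem_nodesWithSuc_iff hAB).1 hη'
  have haT : η ++ [a] ∈ 𝒯 := concat_mem_tree_iff.2 ⟨hηT, by simpa [hs, label]⟩
  have ha'T : η' ++ [a] ∈ 𝒯 := concat_mem_tree_iff.2 ⟨hη'T, by simpa [hs', label]⟩
  have hsa' := state_concat_of_none (x := a) hs'
  have hbT : η' ++ [a] ++ [code η] ∈ 𝒯 :=
    concat_mem_tree_iff.2 ⟨ha'T, by simpa [hsa', label]⟩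
  calc rk 𝒯 𝒯ᴬ (η ++ [a]) = rk 𝒯 𝒯ᴬ (η' ++ [a] ++ [code η]) :=
        rk_eq_of_state_eq_some hAB haT hbT (state_concat_of_none hs)
          (state_concat_of_rel hsa' hlt)
    _ < rk 𝒯 𝒯ᴬ (η' ++ [a]) :=
        rk_lt_rk_of_step (wellFounded_step hAB)
          ⟨hbT, notMem_nodesWithSuc_of_state_eq_some hAB hsa', code η, rfl⟩

theorem codes [Std.Trichotomous r] (hAB : A ≠ B) (hA : A.Nonempty)
    (hcode : ∀ η ∈ 𝒯, code η ∈ B) (hinj : InjOn code 𝒯) : Codes 𝒯 A B := by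
  obtain ⟨a, ha⟩ := hA
  refine ⟨fun η hη => ?_, wellFounded_step hAB, fun η hη η' hη' heq => ?_⟩
  · rw [suc_tree hη]
    cases state r code root η <;> simp [label]
  · change rk 𝒯 (𝒯ᴬ \ {η}) η = rk 𝒯 (𝒯ᴬ \ {η'}) η' at heq
    rw [rk_diff_singleton_self hAB hη ha, rk_diff_singleton_self hAB hη' ha,
      Order.succ_eq_succ_iff] at heq
    rcases trichotomous_of r (code η) (code η') with hlt | hcode_eq | hlt
    · exact absurd heq (rk_concat_lt_of_rel hAB hη hη' ha (hcode η hη.1) hlt).ne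
    · exact hinj hη.1 hη'.1 hcode_eq
    · exact absurd heq.symm (rk_concat_lt_of_rel hAB hη' hη ha (hcode η' hη'.1) hlt).ne

end CodingTree

theorem exists_mapsTo_injOn_of_mk_le {α β : Type u} {s : Set α} {t : Set β} (ht : t.Nonempty)
    (h : #s ≤ #t) : ∃ f : α → β, MapsTo f s t ∧ InjOn f s := by
  classical
  obtain ⟨g⟩ := h
  obtain ⟨b, -⟩ := ht
  refine ⟨fun x => if hx : x ∈ s then g ⟨x, hx⟩ else b, fun x hx => by simp [hx],
    fun x hx y hy hxy => ?_⟩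
  simp only [dif_pos hx, dif_pos hy] at hxy
  exact congrArg Subtype.val (g.injective (Subtype.ext hxy))

theorem mk_lists_in_union_le {X : Type*} {A B : Set X} (hB : B.Infinite) (hcard : #A ≤ #B) :
    #{η : List X | ∀ x ∈ η, x ∈ A ∪ B} ≤ #B := by
  have hℵ₀ : ℵ₀ ≤ #B := infinite_iff.1 hB.to_subtype
  calc #{η : List X | ∀ x ∈ η, x ∈ A ∪ B}
      ≤ #(List ↥(A ∪ B)) := Set.range_list_map_coe (A ∪ B) ▸ mk_range_le
    _ ≤ max ℵ₀ #↥(A ∪ B) := mk_list_le_max _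
    _ ≤ #B := max_le hℵ₀ <| calc
        #↥(A ∪ B) ≤ #A + #B := mk_union_le A B
        _ ≤ #B + #B := add_le_add_left hcard _
        _ = #B := add_eq_self hℵ₀

/-- If `A` and `B` are disjoint, `A ≠ ∅`, `B` is infinite and `|A| ≤ |B|`, then
for `S ∈ {A, B}` there is a tree `T` on `A ∪ B` coding `A` with `Suc_T(⟨⟩) = S`. -/
theorem stmt10 {X : Type*} (A B : Set X) (hdisj : Disjoint A B)
    (hA : A.Nonempty) (hB : B.Infinite)
    (hcard : Cardinal.mk A ≤ Cardinal.mk B)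
    (S : Set X) (hS : S = A ∨ S = B) :
    ∃ T : Set (List X), SeqTree.IsTree T ∧
      (∀ η ∈ T, ∀ x ∈ η, x ∈ A ∪ B) ∧
      SeqTree.Codes T A B ∧
      SeqTree.suc T [] = S := by
  classical
  have hAB : A ≠ B := fun h => hA.ne_empty (disjoint_self.1 (h ▸ hdisj))
  obtain ⟨code, hcode, hinj⟩ :=
    exists_mapsTo_injOn_of_mk_le hB.nonempty (mk_lists_in_union_le hB hcard)
  let T := CodingTree.tree A B WellOrderingRel code (if S = A then none else some hA.some)
  have hunion : ∀ η ∈ T, ∀ x ∈ η, x ∈ A ∪ B := fun _ hη _ => CodingTree.mem_union_of_mem_tree hη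
  refine ⟨T, CodingTree.isTree, hunion,
    CodingTree.codes hAB hA (fun η hη => hcode (hunion η hη)) (hinj.mono hunion), ?_⟩
  rw [CodingTree.suc_tree CodingTree.nil_mem_tree, CodingTree.state_nil]
  rcases hS with rfl | rfl <;> simp [CodingTree.label, hAB.symm]
end

section
/- If there is an isomorphism f from 𝔄 onto 𝔅, then ℭ has a nontrivial automorphism. In fact there is a bijection g : T₀ → T₁, defined inductively by g(∅₀) = ∅₁, g(η⌢⟨a⟩) = g(η)⌢⟨a⟩ when Suc(η) = Suc(g(η)), and g(η⌢⟨a⟩) = g(η)⌢⟨f(a)⟩ (respectively g(η)⌢⟨f⁻¹(a)⟩) when Suc(η) = A, Suc(g(η)) = B (respectively Suc(η) = B, Suc(g(η)) = A), such that g ∪ g⁻¹ is an automorphism of ℭ interchanging T₀ and T₁. -/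
namespace CTree

/-- A tree on `X`: a nonempty set of finite sequences closed under initial segments. -/
def IsTree {X : Type*} (T : Set (List X)) : Prop :=
  T.Nonempty ∧ ∀ η ∈ T, ∀ ν : List X, ν <+: η → ν ∈ T

/-- `Suc_T(η) = {x : η⌢⟨x⟩ ∈ T}`. -/
def suc {X : Type*} (T : Set (List X)) (η : List X) : Set X :=
  {x | η ++ [x] ∈ T}

/-- The universe `C = T₀ ∪ T₁` of the structure `ℭ`: nodes are sequences over
`A ∪ B` (realized as `A ⊕ B`) tagged by which tree they belong to; the tags make
the two trees (in particular their roots `∅₀, ∅₁`) disjoint. -/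
def Node {A B : Type*} (T : Bool → Set (List (A ⊕ B))) : Type _ :=
  {p : Bool × List (A ⊕ B) // p.2 ∈ T p.1}

/-- The interpretation `≤^ℭ`: the union of the two tree orderings (nodes of
different trees are incomparable). -/
def nle {A B : Type*} {T : Bool → Set (List (A ⊕ B))} (p q : Node T) : Prop :=
  p.val.1 = q.val.1 ∧ p.val.2 <+: q.val.2

/-- The interpretation `R^ℭ` of an `n`-ary relation symbol `R` of `L`:
the tuples `(η⌢⟨a₁⟩, …, η⌢⟨aₙ⟩)` where `η ∈ T₀ ∪ T₁` and, if `Suc(η) = A` then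
`(a₁, …, aₙ) ∈ R^𝔄`, while if `Suc(η) = B` then `(a₁, …, aₙ) ∈ R^𝔅`. -/
def RC {A B : Type*} {ι : Type*} {ar : ι → ℕ}
    (RA : ∀ i, (Fin (ar i) → A) → Prop) (RB : ∀ i, (Fin (ar i) → B) → Prop)
    (T : Bool → Set (List (A ⊕ B))) (i : ι) (v : Fin (ar i) → Node T) : Prop :=
  ∃ (l : Bool) (η : List (A ⊕ B)), η ∈ T l ∧
    ((suc (T l) η = Set.range Sum.inl ∧
       ∃ a : Fin (ar i) → A, (∀ k, (v k).val = (l, η ++ [Sum.inl (a k)])) ∧ RA i a) ∨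
     (suc (T l) η = Set.range Sum.inr ∧
       ∃ b : Fin (ar i) → B, (∀ k, (v k).val = (l, η ++ [Sum.inr (b k)])) ∧ RB i b))

/-- An automorphism of `ℭ`: a bijection of the universe preserving `≤^ℭ` and all
the relations `R^ℭ` (in both directions). -/
def IsAut {A B : Type*} {ι : Type*} {ar : ι → ℕ}
    (RA : ∀ i, (Fin (ar i) → A) → Prop) (RB : ∀ i, (Fin (ar i) → B) → Prop)
    (T : Bool → Set (List (A ⊕ B))) (g : Node T ≃ Node T) : Prop :=
  (∀ p q : Node T, nle p q ↔ nle (g p) (g q)) ∧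
  (∀ i (v : Fin (ar i) → Node T), RC RA RB T i v ↔ RC RA RB T i (g ∘ v))

end CTree

/-!
Read a node of one tree letter by letter and copy it into the other tree, starting at the
roots: a letter is copied unchanged while the two current nodes have the same successor set,
and is moved across by `f` (or `f⁻¹`) when one successor set is `A` and the other `B`. Copying
back undoes every step, so this is an involution swapping the two trees; it respects initial
segments because it is defined letter by letter, and it respects the relations of `ℭ` because
the siblings `η⌢⟨aₖ⟩` of a tuple are all moved by the same map, the identity or the
isomorphism `f`.
-/

namespace CTree

lemma IsTree.nil_mem {X : Type*} {S : Set (List X)} (hS : IsTree S) : [] ∈ S := by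
  obtain ⟨η, hη⟩ := hS.1
  exact hS.2 η hη [] List.nil_prefix

section Transfer

variable {A B : Type*} (f : A ≃ B)

/-- `Suc_S(η) ∈ {A, B}` for every `η ∈ S`. -/
def SucIsSummand (S : Set (List (A ⊕ B))) : Prop :=
  ∀ η ∈ S, suc S η = Set.range Sum.inl ∨ suc S η = Set.range Sum.inr

def swapSide : A ⊕ B → A ⊕ B :=
  Sum.elim (fun a => Sum.inr (f a)) (fun b => Sum.inl (f.symm b))

@[simp] lemma swapSide_swapSide (x : A ⊕ B) : swapSide f (swapSide f x) = x := by
  cases x <;> simp [swapSide]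

variable (S S' : Set (List (A ⊕ B)))

open scoped Classical in
noncomputable def transferStep (η ν : List (A ⊕ B)) (x : A ⊕ B) : A ⊕ B :=
  if suc S η = suc S' ν then x else swapSide f x

/-- The copy in `S'` above `ν` of the path `r` read in `S` above `η`; the two accumulators are
the nodes reached so far, whose successor sets decide how each letter is copied. -/
noncomputable def transferFrom :
    List (A ⊕ B) → List (A ⊕ B) → List (A ⊕ B) → List (A ⊕ B)
  | _, _, [] => []
  | η, ν, x :: r =>
    transferStep f S S' η ν x :: transferFrom (η ++ [x]) (ν ++ [transferStep f S S' η ν x]) r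

noncomputable abbrev transfer (η : List (A ⊕ B)) : List (A ⊕ B) :=
  transferFrom f S S' [] [] η

variable {S S'} {η ν : List (A ⊕ B)}

lemma transferStep_of_suc_eq (h : suc S η = suc S' ν) (x : A ⊕ B) :
    transferStep f S S' η ν x = x :=
  if_pos h

lemma transferStep_inl (h : suc S η = Set.range Sum.inl) (h' : suc S' ν = Set.range Sum.inr)
    (a : A) : transferStep f S S' η ν (Sum.inl a) = Sum.inr (f a) := by
  have hne : suc S η ≠ suc S' ν := by
    rw [h, h']
    exact fun he => by simpa using he.le ⟨a, rfl⟩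
  simp [transferStep, hne, swapSide]

lemma transferStep_inr (h : suc S η = Set.range Sum.inr) (h' : suc S' ν = Set.range Sum.inl)
    (b : B) : transferStep f S S' η ν (Sum.inr b) = Sum.inl (f.symm b) := by
  have hne : suc S η ≠ suc S' ν := by
    rw [h, h']
    exact fun he => by simpa using he.le ⟨b, rfl⟩
  simp [transferStep, hne, swapSide]

lemma transferStep_transferStep (x : A ⊕ B) :
    transferStep f S' S ν η (transferStep f S S' η ν x) = x := by
  by_cases h : suc S η = suc S' ν
  · simp [transferStep, h]
  · simp [transferStep, h, Ne.symm h]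

lemma transferStep_mem_suc (hS : SucIsSummand S) (hS' : SucIsSummand S') (hη : η ∈ S)
    (hν : ν ∈ S') {x : A ⊕ B} (hx : x ∈ suc S η) : transferStep f S S' η ν x ∈ suc S' ν := by
  by_cases h : suc S η = suc S' ν
  · rwa [transferStep_of_suc_eq f h, ← h]
  rcases hS η hη with hA | hB <;> rcases hS' ν hν with hA' | hB'
  · exact absurd (hA.trans hA'.symm) h
  · obtain ⟨a, rfl⟩ := hA ▸ hx
    rw [transferStep_inl f hA hB', hB']
    exact ⟨f a, rfl⟩
  · obtain ⟨b, rfl⟩ := hB ▸ hx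
    rw [transferStep_inr f hB hA', hA']
    exact ⟨f.symm b, rfl⟩
  · exact absurd (hB.trans hB'.symm) h

lemma transferFrom_transferFrom (r : List (A ⊕ B)) :
    ∀ η ν, transferFrom f S' S ν η (transferFrom f S S' η ν r) = r := by
  induction r with
  | nil => intro η ν; rfl
  | cons x r ih => intro η ν; simp [transferFrom, transferStep_transferStep, ih]

lemma transferFrom_append (r₁ r₂ : List (A ⊕ B)) : ∀ η ν,
    transferFrom f S S' η ν (r₁ ++ r₂) = transferFrom f S S' η ν r₁ ++
      transferFrom f S S' (η ++ r₁) (ν ++ transferFrom f S S' η ν r₁) r₂ := by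
  induction r₁ with
  | nil => intro η ν; simp [transferFrom]
  | cons x r ih => intro η ν; simp [transferFrom, ih]

lemma transferFrom_mem (hS : IsTree S) (hSsuc : SucIsSummand S) (hS'suc : SucIsSummand S')
    (r : List (A ⊕ B)) : ∀ η ν, ν ∈ S' → η ++ r ∈ S → ν ++ transferFrom f S S' η ν r ∈ S' := by
  induction r with
  | nil => intro η ν hν _; simpa [transferFrom] using hν
  | cons x r ih =>
    intro η ν hν hηr
    have hx : η ++ [x] ∈ S := hS.2 _ hηr _ ⟨r, by simp⟩
    have hη : η ∈ S := hS.2 _ hx _ ⟨[x], rfl⟩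
    have hy := transferStep_mem_suc f hSsuc hS'suc hη hν hx
    simpa [transferFrom] using ih _ _ hy (by simpa using hηr)

lemma transfer_snoc (η : List (A ⊕ B)) (x : A ⊕ B) :
    transfer f S S' (η ++ [x]) =
      transfer f S S' η ++ [transferStep f S S' η (transfer f S S' η) x] := by
  simp [transfer, transferFrom_append, transferFrom]

lemma transfer_prefix_transfer {η η' : List (A ⊕ B)} (h : η <+: η') :
    transfer f S S' η <+: transfer f S S' η' := by
  obtain ⟨r, rfl⟩ := h
  simp only [transfer, transferFrom_append]
  exact List.prefix_append _ _

lemma transfer_mem (hS : IsTree S) (hS' : IsTree S') (hSsuc : SucIsSummand S)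
    (hS'suc : SucIsSummand S') (hη : η ∈ S) : transfer f S S' η ∈ S' := by
  simpa using transferFrom_mem f hS hSsuc hS'suc η [] [] hS'.nil_mem hη

end Transfer

section Mirror

variable {A B : Type*} (f : A ≃ B) {T : Bool → Set (List (A ⊕ B))}
  (hT : ∀ l, IsTree (T l)) (hsuc : ∀ l, SucIsSummand (T l))

/-- The map `g ∪ g⁻¹` on `C = T₀ ∪ T₁`. -/
noncomputable def mirror (c : Node T) : Node T :=
  ⟨(!c.val.1, transfer f (T c.val.1) (T !c.val.1) c.val.2),
    transfer_mem f (hT _) (hT _) (hsuc _) (hsuc _) c.property⟩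

lemma mirror_val (c : Node T) :
    (mirror f hT hsuc c).val = (!c.val.1, transfer f (T c.val.1) (T !c.val.1) c.val.2) :=
  rfl

lemma mirror_involutive : Function.Involutive (mirror f hT hsuc) := fun c =>
  Subtype.ext <| by simp [mirror_val, transferFrom_transferFrom]

lemma mirror_snoc {c c' : Node T} {x : A ⊕ B} (hc' : c'.val = (c.val.1, c.val.2 ++ [x])) :
    (mirror f hT hsuc c').val = ((mirror f hT hsuc c).val.1, (mirror f hT hsuc c).val.2 ++
      [transferStep f (T c.val.1) (T (mirror f hT hsuc c).val.1) c.val.2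
        (mirror f hT hsuc c).val.2 x]) := by
  rw [mirror_val, mirror_val, hc', transfer_snoc]

lemma nle_mirror_of_nle {p q : Node T} (h : nle p q) :
    nle (mirror f hT hsuc p) (mirror f hT hsuc q) := by
  obtain ⟨hl, hpq⟩ := h
  refine ⟨by simp [mirror_val, hl], ?_⟩
  simpa only [mirror_val, hl] using transfer_prefix_transfer f hpq

lemma nle_mirror_iff (p q : Node T) :
    nle (mirror f hT hsuc p) (mirror f hT hsuc q) ↔ nle p q :=
  ⟨fun h => by simpa only [mirror_involutive f hT hsuc _] using nle_mirror_of_nle f hT hsuc h,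
    nle_mirror_of_nle f hT hsuc⟩

variable {ι : Type*} {ar : ι → ℕ}
  {RA : ∀ i, (Fin (ar i) → A) → Prop} {RB : ∀ i, (Fin (ar i) → B) → Prop}

lemma rc_mirror_of_rc (hf : ∀ i (a : Fin (ar i) → A), RA i a ↔ RB i (fun k => f (a k)))
    {i : ι} {v : Fin (ar i) → Node T} (h : RC RA RB T i v) :
    RC RA RB T i (mirror f hT hsuc ∘ v) := by
  obtain ⟨l, η, hη, hcase⟩ := h
  set c : Node T := ⟨(l, η), hη⟩
  set ν := (mirror f hT hsuc c).val.2
  have hv : ∀ k x, (v k).val = (l, η ++ [x]) →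
      (mirror f hT hsuc (v k)).val = (!l, ν ++ [transferStep f (T l) (T !l) η ν x]) :=
    fun k x hk => mirror_snoc f hT hsuc (c := c) hk
  have hν : ν ∈ T !l := (mirror f hT hsuc c).property
  refine ⟨!l, ν, hν, ?_⟩
  rcases hsuc (!l) ν hν with hA' | hB' <;>
    rcases hcase with ⟨hA, a, ha, hRA⟩ | ⟨hB, b, hb, hRB⟩
  · refine .inl ⟨hA', a, fun k => ?_, hRA⟩
    rw [Function.comp_apply, hv k _ (ha k), transferStep_of_suc_eq f (hA.trans hA'.symm)]
  · refine .inl ⟨hA', fun k => f.symm (b k), fun k => ?_, (hf i _).2 (by simpa using hRB)⟩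
    rw [Function.comp_apply, hv k _ (hb k), transferStep_inr f hB hA']
  · refine .inr ⟨hB', fun k => f (a k), fun k => ?_, (hf i a).1 hRA⟩
    rw [Function.comp_apply, hv k _ (ha k), transferStep_inl f hA hB']
  · refine .inr ⟨hB', b, fun k => ?_, hRB⟩
    rw [Function.comp_apply, hv k _ (hb k), transferStep_of_suc_eq f (hB.trans hB'.symm)]

lemma rc_mirror_iff (hf : ∀ i (a : Fin (ar i) → A), RA i a ↔ RB i (fun k => f (a k)))
    (i : ι) (v : Fin (ar i) → Node T) :
    RC RA RB T i (mirror f hT hsuc ∘ v) ↔ RC RA RB T i v := by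
  refine ⟨fun h => ?_, rc_mirror_of_rc f hT hsuc hf⟩
  simpa only [← Function.comp_assoc, (mirror_involutive f hT hsuc).comp_self,
    Function.id_comp] using rc_mirror_of_rc f hT hsuc hf h

end Mirror

end CTree

open CTree in
theorem stmt11_general {A B : Type*}
    {ι : Type*} {ar : ι → ℕ}
    (RA : ∀ i, (Fin (ar i) → A) → Prop) (RB : ∀ i, (Fin (ar i) → B) → Prop)
    (T : Bool → Set (List (A ⊕ B)))
    (hT : ∀ l, CTree.IsTree (T l))
    (hsuc : ∀ l, ∀ η ∈ T l, CTree.suc (T l) η = Set.range Sum.inl ∨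
      CTree.suc (T l) η = Set.range Sum.inr)
    (f : A ≃ B)
    (hf : ∀ i (a : Fin (ar i) → A), RA i a ↔ RB i (fun k => f (a k))) :
    ∃ g : CTree.Node T ≃ CTree.Node T,
      CTree.IsAut RA RB T g ∧
      (∀ c : CTree.Node T, (g c).val.1 = !c.val.1) ∧
      (∃ c : CTree.Node T, g c ≠ c) ∧
      (∀ c : CTree.Node T, c.val = (false, []) → (g c).val = (true, [])) ∧
      (∀ (c c' : CTree.Node T) (x : A ⊕ B),
        c'.val = (c.val.1, c.val.2 ++ [x]) →
        CTree.suc (T c.val.1) c.val.2 = CTree.suc (T (g c).val.1) (g c).val.2 →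
        (g c').val = ((g c).val.1, (g c).val.2 ++ [x])) ∧
      (∀ (c c' : CTree.Node T) (a : A),
        c'.val = (c.val.1, c.val.2 ++ [Sum.inl a]) →
        CTree.suc (T c.val.1) c.val.2 = Set.range Sum.inl →
        CTree.suc (T (g c).val.1) (g c).val.2 = Set.range Sum.inr →
        (g c').val = ((g c).val.1, (g c).val.2 ++ [Sum.inr (f a)])) ∧
      (∀ (c c' : CTree.Node T) (b : B),
        c'.val = (c.val.1, c.val.2 ++ [Sum.inr b]) →
        CTree.suc (T c.val.1) c.val.2 = Set.range Sum.inr →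
        CTree.suc (T (g c).val.1) (g c).val.2 = Set.range Sum.inl →
        (g c').val = ((g c).val.1, (g c).val.2 ++ [Sum.inl (f.symm b)])) := by
  have hsuc' : ∀ l, SucIsSummand (T l) := hsuc
  let g := (mirror_involutive f hT hsuc').toPerm
  have hstep : ∀ (c c' : Node T) x, c'.val = (c.val.1, c.val.2 ++ [x]) →
      (g c').val = ((g c).val.1,
        (g c).val.2 ++ [transferStep f (T c.val.1) (T (g c).val.1) c.val.2 (g c).val.2 x]) :=
    fun _ _ _ => mirror_snoc f hT hsuc'
  let root : Node T := ⟨(false, []), (hT false).nil_mem⟩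
  refine ⟨g, ⟨fun p q => (nle_mirror_iff f hT hsuc' p q).symm,
      fun i v => (rc_mirror_iff f hT hsuc' hf i v).symm⟩, fun c => rfl,
    ⟨root, fun h => Bool.noConfusion (congrArg (fun c : Node T => c.val.1) h : true = false)⟩,
    fun c hc => by simp [g, mirror_val, hc, transferFrom], ?_, ?_, ?_⟩
  · exact fun c c' x hc' h => (hstep c c' x hc').trans (by rw [transferStep_of_suc_eq f h])
  · exact fun c c' a hc' h h' => (hstep c c' _ hc').trans (by rw [transferStep_inl f h h'])
  · exact fun c c' b hc' h h' => (hstep c c' _ hc').trans (by rw [transferStep_inr f h h'])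

/-- If `f : 𝔄 ≅ 𝔅` is an isomorphism, then `ℭ` has a nontrivial automorphism:
there is a bijection `g` of `C`, with `g(∅₀) = ∅₁`, `g(η⌢⟨a⟩) = g(η)⌢⟨a⟩` when
`Suc(η) = Suc(g(η))`, `g(η⌢⟨a⟩) = g(η)⌢⟨f(a)⟩` when `Suc(η) = A`,
`Suc(g(η)) = B`, and `g(η⌢⟨b⟩) = g(η)⌢⟨f⁻¹(b)⟩` in the mirror case, which is an
automorphism of `ℭ` interchanging `T₀` and `T₁`. -/
theorem stmt11 {A B : Type*} [Nonempty A] [Nonempty B]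
    {ι : Type*} {ar : ι → ℕ}
    (RA : ∀ i, (Fin (ar i) → A) → Prop) (RB : ∀ i, (Fin (ar i) → B) → Prop)
    (T : Bool → Set (List (A ⊕ B)))
    (hT : ∀ l, CTree.IsTree (T l))
    (hsuc : ∀ l, ∀ η ∈ T l, CTree.suc (T l) η = Set.range Sum.inl ∨
      CTree.suc (T l) η = Set.range Sum.inr)
    (hroot0 : CTree.suc (T false) [] = Set.range Sum.inl)
    (hroot1 : CTree.suc (T true) [] = Set.range Sum.inr)
    (f : A ≃ B)
    (hf : ∀ i (a : Fin (ar i) → A), RA i a ↔ RB i (fun k => f (a k))) :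
    ∃ g : CTree.Node T ≃ CTree.Node T,
      CTree.IsAut RA RB T g ∧
      (∀ c : CTree.Node T, (g c).val.1 = !c.val.1) ∧
      (∃ c : CTree.Node T, g c ≠ c) ∧
      (∀ c : CTree.Node T, c.val = (false, []) → (g c).val = (true, [])) ∧
      (∀ (c c' : CTree.Node T) (x : A ⊕ B),
        c'.val = (c.val.1, c.val.2 ++ [x]) →
        CTree.suc (T c.val.1) c.val.2 = CTree.suc (T (g c).val.1) (g c).val.2 →
        (g c').val = ((g c).val.1, (g c).val.2 ++ [x])) ∧
      (∀ (c c' : CTree.Node T) (a : A),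
        c'.val = (c.val.1, c.val.2 ++ [Sum.inl a]) →
        CTree.suc (T c.val.1) c.val.2 = Set.range Sum.inl →
        CTree.suc (T (g c).val.1) (g c).val.2 = Set.range Sum.inr →
        (g c').val = ((g c).val.1, (g c).val.2 ++ [Sum.inr (f a)])) ∧
      (∀ (c c' : CTree.Node T) (b : B),
        c'.val = (c.val.1, c.val.2 ++ [Sum.inr b]) →
        CTree.suc (T c.val.1) c.val.2 = Set.range Sum.inr →
        CTree.suc (T (g c).val.1) (g c).val.2 = Set.range Sum.inl →
        (g c').val = ((g c).val.1, (g c).val.2 ++ [Sum.inl (f.symm b)])) :=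
  stmt11_general RA RB T hT hsuc f hf
end

section
/- Assume additionally that both T₀ and T₁ code A, i.e. satisfy: (2) rk(η, T_l^A) < ∞ for every η ∈ T_l, where T_l^A = {η ∈ T_l : Suc(η) = A}, and (3) the map η ↦ rk(η, T_l^A \ {η}) is injective on T_l^A (l = 0, 1). If g is an automorphism of ℭ such that Suc(g(η)) = Suc(η) for every η ∈ C, then g is the identity. In particular, every nontrivial automorphism g of ℭ admits a node η with Suc(η) ≠ Suc(g(η)). -/
namespace CTree

/-- The descent relation used to compute the rank `rk(·, A')` in a tree `T` of
finite sequences: `ν` lies below `μ` iff `ν` is a one-step extension of `μ`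
inside `T` and `μ ∉ A'` (descent stops upon reaching `A'`).  `rk(η, A') < ∞`
for all `η ∈ T` iff this relation is well-founded, i.e. iff no infinite branch
of `T` avoids `A'`. -/
def step {X : Type*} (T A' : Set (List X)) (ν μ : List X) : Prop :=
  ν ∈ T ∧ μ ∉ A' ∧ ∃ x, ν = μ ++ [x]

open Classical in
/-- The rank `rk(η, A')` of `η` with respect to `A'`, defined as an ordinal when
it is `< ∞`, i.e. when the descent relation is well-founded (junk value `0`
otherwise). -/
noncomputable def rk {X : Type*} (T A' : Set (List X)) (η : List X) : Ordinal :=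
  if h : WellFounded (step T A') then
    @IsWellFounded.rank _ (step T A') ⟨h⟩ η
  else 0

/-- `T^A`, the set of nodes of `T` whose successor set is `A` (here
`A = Set.range Sum.inl` inside `A ⊕ B`). -/
def TA {A B : Type*} (T : Set (List (A ⊕ B))) : Set (List (A ⊕ B)) :=
  {η ∈ T | suc T η = Set.range Sum.inl}

end CTree

universe u

theorem IsWellFounded.rank_apply_relIso {α β : Type u} {r : α → α → Prop} {s : β → β → Prop}
    [hr : IsWellFounded α r] [IsWellFounded β s] (e : r ≃r s) (a : α) :
    IsWellFounded.rank s (e a) = IsWellFounded.rank r a := by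
  induction a using hr.induction with
  | _ a IH =>
    rw [IsWellFounded.rank_eq, IsWellFounded.rank_eq]
    exact (Equiv.iSup_congr (e.toEquiv.subtypeEquiv fun b => e.map_rel_iff.symm)
      (f := fun b : {b // r b a} => Order.succ (IsWellFounded.rank r b.1))
      (g := fun b : {b // s b (e a)} => Order.succ (IsWellFounded.rank s b.1))
      fun b => by simp [IH b b.2]).symm

namespace CTree

section Tree

variable {X : Type*} {T A' A'' : Set (List X)}

theorem IsTree.mem_of_prefix (hT : IsTree T) {η ν : List X} (hη : η ∈ T) (h : ν <+: η) :
    ν ∈ T :=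
  hT.2 η hη ν h

theorem IsTree.nil_mem_s13 (hT : IsTree T) : [] ∈ T :=
  let ⟨_, hη⟩ := hT.1
  hT.mem_of_prefix hη List.nil_prefix

theorem exists_eq_append_singleton_iff {μ ν : List X} :
    (∃ x, ν = μ ++ [x]) ↔ μ <+: ν ∧ ν.length = μ.length + 1 := by
  constructor
  · rintro ⟨x, rfl⟩
    exact ⟨List.prefix_append _ _, by simp⟩
  · rintro ⟨⟨t, rfl⟩, h⟩
    obtain ⟨x, rfl⟩ := List.length_eq_one_iff.mp (by simpa using h)
    exact ⟨x, rfl⟩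

theorem exists_prefix_mem_of_wellFounded (hwf : WellFounded (step T A'))
    (hne : ∀ η ∈ T, (suc T η).Nonempty) {η : List X} (hη : η ∈ T) : ∃ μ ∈ A', η <+: μ := by
  induction η using hwf.induction with
  | _ η IH =>
    by_cases hA : η ∈ A'
    · exact ⟨η, hA, List.prefix_refl η⟩
    obtain ⟨x, hx⟩ := hne η hη
    obtain ⟨μ, hμ, hpre⟩ := IH _ ⟨hx, hA, x, rfl⟩ hx
    exact ⟨μ, hμ, (List.prefix_append _ _).trans hpre⟩

theorem wellFounded_step_diff_singleton (hwf : WellFounded (step T A')) (μ : List X) :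
    WellFounded (step T (A' \ {μ})) := by
  classical
  -- A descent through `μ` continues strictly above `μ`, where `μ` is never met again.
  let key : List X → ℕ × List X := fun ν => (if μ <+: ν ∧ μ.length < ν.length then 0 else 1, ν)
  refine Subrelation.wf (r := InvImage (Prod.Lex (· < ·) (step T A')) key) ?_
    (InvImage.wf key (wellFounded_lt.prod_lex hwf))
  rintro ν η ⟨hν, hη, x, rfl⟩
  simp only [InvImage, Prod.lex_def, key]
  by_cases hημ : η = μ
  · subst hημ
    left
    simp [List.prefix_append]
  · have hηA : η ∉ A' := fun h => hη ⟨h, hημ⟩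
    by_cases hμη : μ <+: η ∧ μ.length < η.length
    · have : μ <+: η ++ [x] ∧ μ.length < (η ++ [x]).length :=
        ⟨hμη.1.trans (List.prefix_append _ _), by simp; omega⟩
      exact Or.inr ⟨by rw [if_pos this, if_pos hμη], hν, hηA, x, rfl⟩
    · rw [if_neg hμη]
      split_ifs
      · exact Or.inl zero_lt_one
      · exact Or.inr ⟨rfl, hν, hηA, x, rfl⟩

theorem rk_apply_of_relIso {T' : Set (List X)} (e : step T A' ≃r step T' A'')
    (hwf : WellFounded (step T A')) (η : List X) : rk T' A'' (e η) = rk T A' η := by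
  have hwf' : WellFounded (step T' A'') := e.symm.toRelEmbedding.wellFounded hwf
  have : IsWellFounded _ (step T A') := ⟨hwf⟩
  have : IsWellFounded _ (step T' A'') := ⟨hwf'⟩
  rw [rk, rk, dif_pos hwf, dif_pos hwf']
  exact IsWellFounded.rank_apply_relIso e η

def IsTreeAut (T : Set (List X)) (σ : Equiv.Perm (List X)) : Prop :=
  (∀ ν, σ ν ∈ T ↔ ν ∈ T) ∧ ∀ ν ∈ T, ∀ μ, (∃ x, σ ν = σ μ ++ [x]) ↔ ∃ x, ν = μ ++ [x]

variable {σ : Equiv.Perm (List X)}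

def IsTreeAut.stepRelIso (hσ : IsTreeAut T σ) (hA : ∀ ν, σ ν ∈ A'' ↔ ν ∈ A') :
    step T A' ≃r step T A'' where
  toEquiv := σ
  map_rel_iff' {ν μ} := by
    change (σ ν ∈ T ∧ σ μ ∉ A'' ∧ _) ↔ (ν ∈ T ∧ μ ∉ A' ∧ _)
    rw [hσ.1, hA]
    exact and_congr_right fun hν => and_congr_right fun _ => hσ.2 ν hν μ

theorem IsTreeAut.rk_diff_singleton (hσ : IsTreeAut T σ) (hA : ∀ ν, σ ν ∈ A' ↔ ν ∈ A')
    (hwf : WellFounded (step T A')) (η : List X) :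
    rk T (A' \ {σ η}) (σ η) = rk T (A' \ {η}) η :=
  rk_apply_of_relIso (hσ.stepRelIso fun ν => by simp [hA, σ.injective.eq_iff])
    (wellFounded_step_diff_singleton hwf η) η

theorem IsTreeAut.apply_eq_self (hσ : IsTreeAut T σ) (hA : ∀ ν, σ ν ∈ A' ↔ ν ∈ A')
    (hwf : WellFounded (step T A')) (hinj : Set.InjOn (fun η => rk T (A' \ {η}) η) A')
    {η : List X} (hη : η ∈ A') : σ η = η :=
  hinj ((hA η).2 hη) hη (hσ.rk_diff_singleton hA hwf η)

end Tree

section Automorphism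

variable {A B : Type*} {T : Bool → Set (List (A ⊕ B))} {g : Node T ≃ Node T}

def root (hT : ∀ l, IsTree (T l)) (l : Bool) : Node T :=
  ⟨(l, []), (hT l).nil_mem_s13⟩

theorem root_nle (hT : ∀ l, IsTree (T l)) (c : Node T) : nle (root hT c.val.1) c :=
  ⟨rfl, List.nil_prefix⟩

theorem eq_root_of_nle_root (hT : ∀ l, IsTree (T l)) {c : Node T} {l : Bool}
    (h : nle c (root hT l)) : c = root hT l :=
  Subtype.ext (Prod.ext h.1 (List.prefix_nil.mp h.2))

theorem apply_root_eq_root_tag (hT : ∀ l, IsTree (T l)) (hg : ∀ p q, nle p q ↔ nle (g p) (g q))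
    (l : Bool) : g (root hT l) = root hT (g (root hT l)).val.1 :=
  g.eq_symm_apply.1 <| Eq.symm <| eq_root_of_nle_root hT <| by
    rw [hg, g.apply_symm_apply]
    exact root_nle hT _

theorem range_inl_ne_range_inr [Nonempty A] :
    Set.range (Sum.inl : A → A ⊕ B) ≠ Set.range Sum.inr := fun h => by
  obtain ⟨a⟩ := ‹Nonempty A›
  obtain ⟨b, hb⟩ : Sum.inl a ∈ Set.range (Sum.inr : B → A ⊕ B) := h ▸ Set.mem_range_self a
  cases hb

theorem apply_root [Nonempty A] (hT : ∀ l, IsTree (T l))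
    (hroot0 : suc (T false) [] = Set.range Sum.inl) (hroot1 : suc (T true) [] = Set.range Sum.inr)
    (hg : ∀ p q, nle p q ↔ nle (g p) (g q))
    (hgs : ∀ c, suc (T (g c).val.1) (g c).val.2 = suc (T c.val.1) c.val.2) (l : Bool) :
    g (root hT l) = root hT l := by
  have htag : (g (root hT l)).val.1 = l := by
    have hsuc := hgs (root hT l)
    rw [apply_root_eq_root_tag hT hg] at hsuc
    revert hsuc
    generalize (g (root hT l)).val.1 = m
    cases l <;> cases m <;> simp [root, hroot0, hroot1, range_inl_ne_range_inr,
      range_inl_ne_range_inr.symm]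
  rw [apply_root_eq_root_tag hT hg, htag]

theorem tag_apply [Nonempty A] (hT : ∀ l, IsTree (T l))
    (hroot0 : suc (T false) [] = Set.range Sum.inl) (hroot1 : suc (T true) [] = Set.range Sum.inr)
    (hg : ∀ p q, nle p q ↔ nle (g p) (g q))
    (hgs : ∀ c, suc (T (g c).val.1) (g c).val.2 = suc (T c.val.1) c.val.2) (c : Node T) :
    (g c).val.1 = c.val.1 := by
  have h := (hg _ c).1 (root_nle hT c)
  rw [apply_root hT hroot0 hroot1 hg hgs] at h
  exact h.1.symm

def nleEquivFin (hT : ∀ l, IsTree (T l)) (c : Node T) :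
    {p : Node T // nle p c} ≃ Fin (c.val.2.length + 1) where
  toFun p := ⟨p.val.val.2.length, Nat.lt_succ_of_le p.2.2.length_le⟩
  invFun k := ⟨⟨(c.val.1, c.val.2.take k), (hT _).mem_of_prefix c.2 (List.take_prefix _ _)⟩,
    rfl, List.take_prefix _ _⟩
  left_inv p := Subtype.ext <| Subtype.ext <|
    Prod.ext p.2.1.symm (List.prefix_iff_eq_take.mp p.2.2).symm
  right_inv k := Fin.ext <| by simpa using Nat.le_of_lt_succ k.isLt

theorem length_apply (hT : ∀ l, IsTree (T l)) (hg : ∀ p q, nle p q ↔ nle (g p) (g q))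
    (c : Node T) : (g c).val.2.length = c.val.2.length := by
  simpa using Fin.equiv_iff_eq.mp ⟨(nleEquivFin hT (g c)).symm.trans
    ((g.subtypeEquiv fun p => hg p c).symm.trans (nleEquivFin hT c))⟩

theorem apply_eq_self_of_nle (hT : ∀ l, IsTree (T l)) (hg : ∀ p q, nle p q ↔ nle (g p) (g q))
    (htag : ∀ c, (g c).val.1 = c.val.1) {c d : Node T} (hcd : nle c d) (hd : g d = d) :
    g c = c := by
  have hgcd := (hg c d).1 hcd
  rw [hd] at hgcd
  refine Subtype.ext (Prod.ext (htag c) ?_)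
  exact (List.prefix_of_prefix_length_le hgcd.2 hcd.2 (length_apply hT hg c).le).eq_of_length
    (length_apply hT hg c)

def fiberEquiv (l : Bool) : {c : Node T // c.val.1 = l} ≃ T l where
  toFun c := ⟨c.1.val.2, by obtain ⟨⟨⟨l', ν⟩, h⟩, rfl⟩ := c; exact h⟩
  invFun ν := ⟨⟨(l, ν), ν.2⟩, rfl⟩
  left_inv := by rintro ⟨⟨⟨l', ν⟩, h⟩, rfl⟩; rfl
  right_inv _ := rfl

open Classical in
/-- The action of a tag-preserving `g` on the `l`-th tree, extended by the identity. -/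
noncomputable def treePerm (htag : ∀ c, (g c).val.1 = c.val.1) (l : Bool) :
    Equiv.Perm (List (A ⊕ B)) :=
  Equiv.Perm.subtypeCongr ((fiberEquiv l).symm.trans
    ((g.subtypeEquiv fun c => by rw [htag]).trans (fiberEquiv l))) (Equiv.refl _)

variable (htag : ∀ c, (g c).val.1 = c.val.1) {l : Bool} {ν : List (A ⊕ B)}

open Classical in
theorem treePerm_apply_of_mem (h : ν ∈ T l) : treePerm htag l ν = (g ⟨(l, ν), h⟩).val.2 :=
  Equiv.Perm.subtypeCongr.left_apply _ _ h

open Classical in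
theorem treePerm_apply_of_notMem (h : ν ∉ T l) : treePerm htag l ν = ν :=
  Equiv.Perm.subtypeCongr.right_apply _ _ h

theorem treePerm_mem_iff : treePerm htag l ν ∈ T l ↔ ν ∈ T l := by
  by_cases h : ν ∈ T l
  · have hg := (g ⟨(l, ν), h⟩).2
    rw [htag ⟨(l, ν), h⟩] at hg
    simpa [treePerm_apply_of_mem htag h, h] using hg
  · rw [treePerm_apply_of_notMem htag h]

theorem apply_mk (h : ν ∈ T l) :
    g ⟨(l, ν), h⟩ = ⟨(l, treePerm htag l ν), (treePerm_mem_iff htag).2 h⟩ :=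
  Subtype.ext (Prod.ext (htag _) (treePerm_apply_of_mem htag h).symm)

theorem isTreeAut_treePerm (hT : ∀ l, IsTree (T l)) (hg : ∀ p q, nle p q ↔ nle (g p) (g q))
    (l : Bool) : IsTreeAut (T l) (treePerm htag l) := by
  refine ⟨fun ν => treePerm_mem_iff htag, fun ν hν μ => ?_⟩
  by_cases hμ : μ ∈ T l
  · have hle := hg ⟨(l, μ), hμ⟩ ⟨(l, ν), hν⟩
    have hlenμ := length_apply hT hg ⟨(l, μ), hμ⟩
    have hlenν := length_apply hT hg ⟨(l, ν), hν⟩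
    simp only [apply_mk htag, exists_eq_append_singleton_iff, nle, true_and] at hle hlenμ hlenν ⊢
    rw [← hle, hlenμ, hlenν]
  · have hσμ : treePerm htag l μ ∉ T l := (treePerm_mem_iff htag).not.2 hμ
    refine iff_of_false ?_ ?_ <;> rintro ⟨x, hx⟩
    · exact hσμ <| (hT l).mem_of_prefix ((treePerm_mem_iff htag).2 hν) ⟨[x], hx.symm⟩
    · exact hμ <| (hT l).mem_of_prefix hν ⟨[x], hx.symm⟩

theorem treePerm_mem_TA_iff
    (hgs : ∀ c, suc (T (g c).val.1) (g c).val.2 = suc (T c.val.1) c.val.2) :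
    treePerm htag l ν ∈ TA (T l) ↔ ν ∈ TA (T l) := by
  by_cases h : ν ∈ T l
  · have hsuc := hgs ⟨(l, ν), h⟩
    rw [apply_mk htag] at hsuc
    simp only [TA, Set.mem_ofPred_eq, treePerm_mem_iff htag]
    rw [hsuc]
  · rw [treePerm_apply_of_notMem htag h]

end Automorphism

theorem apply_eq_self_of_suc_apply_eq {A B : Type*} [Nonempty A] [Nonempty B]
    {T : Bool → Set (List (A ⊕ B))} {g : Node T ≃ Node T} (hT : ∀ l, IsTree (T l))
    (hsuc : ∀ l, ∀ η ∈ T l, suc (T l) η = Set.range Sum.inl ∨ suc (T l) η = Set.range Sum.inr)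
    (hroot0 : suc (T false) [] = Set.range Sum.inl) (hroot1 : suc (T true) [] = Set.range Sum.inr)
    (hwf : ∀ l, WellFounded (step (T l) (TA (T l))))
    (hinj : ∀ l, Set.InjOn (fun η => rk (T l) (TA (T l) \ {η}) η) (TA (T l)))
    (hg : ∀ p q, nle p q ↔ nle (g p) (g q))
    (hgs : ∀ c, suc (T (g c).val.1) (g c).val.2 = suc (T c.val.1) c.val.2) (c : Node T) :
    g c = c := by
  have htag := tag_apply hT hroot0 hroot1 hg hgs
  have hfix : ∀ {l μ} (hμ : μ ∈ TA (T l)), g ⟨(l, μ), hμ.1⟩ = ⟨(l, μ), hμ.1⟩ := by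
    intro l μ hμ
    rw [apply_mk htag]
    congr
    exact (isTreeAut_treePerm htag hT hg l).apply_eq_self
      (fun _ => treePerm_mem_TA_iff htag hgs) (hwf l) (hinj l) hμ
  have hne : ∀ l, ∀ η ∈ T l, (suc (T l) η).Nonempty := fun l η hη => by
    rcases hsuc l η hη with h | h <;> rw [h] <;> exact Set.range_nonempty _
  obtain ⟨μ, hμ, hcμ⟩ := exists_prefix_mem_of_wellFounded (hwf c.val.1) (hne _) c.2
  exact apply_eq_self_of_nle hT hg htag (d := ⟨(c.val.1, μ), hμ.1⟩) ⟨rfl, hcμ⟩ (hfix hμ)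

end CTree

/-- Assume both trees `T₀`, `T₁` code `A`, i.e. `rk(η, T_l^A) < ∞` for every
`η ∈ T_l` and `η ↦ rk(η, T_l^A \ {η})` is injective on `T_l^A`.  Then every
automorphism `g` of `ℭ` with `Suc(g(η)) = Suc(η)` for all `η ∈ C` is the
identity; in particular, every nontrivial automorphism of `ℭ` admits a node `η`
with `Suc(η) ≠ Suc(g(η))`. -/
theorem stmt13 {A B : Type*} [Nonempty A] [Nonempty B]
    {ι : Type*} {ar : ι → ℕ}
    (RA : ∀ i, (Fin (ar i) → A) → Prop) (RB : ∀ i, (Fin (ar i) → B) → Prop)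
    (T : Bool → Set (List (A ⊕ B)))
    (hT : ∀ l, CTree.IsTree (T l))
    (hsuc : ∀ l, ∀ η ∈ T l, CTree.suc (T l) η = Set.range Sum.inl ∨
      CTree.suc (T l) η = Set.range Sum.inr)
    (hroot0 : CTree.suc (T false) [] = Set.range Sum.inl)
    (hroot1 : CTree.suc (T true) [] = Set.range Sum.inr)
    (hwf : ∀ l, WellFounded (CTree.step (T l) (CTree.TA (T l))))
    (hinj : ∀ l, Set.InjOn
      (fun η => CTree.rk (T l) (CTree.TA (T l) \ {η}) η) (CTree.TA (T l))) :
    (∀ g : CTree.Node T ≃ CTree.Node T, CTree.IsAut RA RB T g →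
      (∀ c : CTree.Node T,
        CTree.suc (T (g c).val.1) (g c).val.2 = CTree.suc (T c.val.1) c.val.2) →
      ∀ c, g c = c) ∧
    (∀ g : CTree.Node T ≃ CTree.Node T, CTree.IsAut RA RB T g →
      (∃ c, g c ≠ c) →
      ∃ c : CTree.Node T,
        CTree.suc (T (g c).val.1) (g c).val.2 ≠ CTree.suc (T c.val.1) c.val.2) := by
  have hfix := fun (g : CTree.Node T ≃ CTree.Node T) (hg : CTree.IsAut RA RB T g) hgs =>
    CTree.apply_eq_self_of_suc_apply_eq hT hsuc hroot0 hroot1 hwf hinj hg.1 hgs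
  refine ⟨hfix, fun g hg ⟨c, hc⟩ => ?_⟩
  by_contra! hgs
  exact hc (hfix g hg hgs c)
end

section
/- The partial order P'_T, consisting of all finite partial functions f from A to ω such that f(x) ≠ f(y) whenever x < y both lie in the domain of f, ordered by reverse inclusion, satisfies the countable chain condition: every set of pairwise incompatible elements of P'_T is countable. (Here f and g are compatible iff f ∪ g is a function belonging to P'_T.) -/
namespace Tw1

/-- A tree of height `ω₁`: a partial order in which the strict predecessors of
every element are linearly ordered, well-ordered, and of countable order type. -/
def IsTree (T : Type*) [PartialOrder T] : Prop :=
  ∀ t : T,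
    (∀ a b : T, a < t → b < t → a ≤ b ∨ b ≤ a) ∧
    Set.Countable {s : T | s < t} ∧
    ∀ S : Set T, S ⊆ {s : T | s < t} → S.Nonempty → ∃ m ∈ S, ∀ s ∈ S, m ≤ s

/-- The ordinals below `ω₁`, used as index set `{i : i < ω₁}`. -/
def Iw1 : Type 1 := ↥(Set.Iio (Cardinal.aleph.{0} 1).ord)

noncomputable instance : LinearOrder Iw1 := by unfold Iw1; infer_instance

/-- An `ω₁`-branch: a maximal linearly ordered subset of order type `ω₁`. -/
def IsOmega1Branch {T : Type*} [PartialOrder T] (B : Set T) : Prop :=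
  IsMaxChain (· ≤ ·) B ∧ Nonempty (Iw1 ≃o ↥B)

/-- `B'_j = B_j \ ⋃_{i<j} B_i`. -/
def Bseg {T : Type*} (Bf : Iw1 → Set T) (j : Iw1) : Set T :=
  Bf j \ ⋃ (i : Iw1) (_ : i < j), Bf i

/-- The forcing notion `P'_T` "sealing the branches": finite partial functions
(realized as finitely-supported `T → Option ℕ`) from `A` to `ω` that are
injective on comparable pairs. -/
def Pcond {T : Type*} [PartialOrder T] (A : Set T) : Set (T → Option ℕ) :=
  {f | {t | f t ≠ none}.Finite ∧ {t | f t ≠ none} ⊆ A ∧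
    ∀ x y : T, x < y → f x ≠ none → f y ≠ none → f x ≠ f y}

/-- Two conditions are compatible iff their union `f ∪ g` is a function which
again belongs to `P'_T`. -/
def Compat {T : Type*} [PartialOrder T] (A : Set T) (f g : T → Option ℕ) : Prop :=
  (∀ t, f t ≠ none → g t ≠ none → f t = g t) ∧
  (fun t => (f t).orElse (fun _ => g t)) ∈ Pcond A

end Tw1

/-!
By the Δ-system lemma and pigeonhole, an uncountable antichain of `P'_T` contains an uncountable
family of conditions whose domains form a Δ-system with root `R`, which agree on `R`, and whose
tails `dom f \ R` all have the same size `n`. Two such conditions are compatible unless a tail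
point of one is comparable with a tail point of the other. Enumerate the tails as
`e f : Fin n → T` and fix an ultrafilter `𝒰` on the family containing the co-countable sets. Only
countably many `g` have a tail point below a tail point of `f` (predecessors are countable and
tails are disjoint), so each `f` has positions `(a, b)` with `e f a < e g b` for `𝒰`-almost
all `g`. For uncountably many `f` these positions coincide, and then any two of the points
`e f a` lie below a common `e g b`, hence are comparable: they form an uncountable chain in `A`.

This is impossible: a maximal chain through an uncountable chain of `A` is well ordered with
countable initial segments, hence is an `ω₁`-branch `B_k`; but `x_j ∈ B_k` forces `j ≤ k`,
because `x_j` avoids every `B_i` with `i < j`.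
-/

open Set Function

section DeltaSystem

variable {ι α : Type*}

lemma nonempty_of_not_countable {J : Set ι} (hJ : ¬J.Countable) : J.Nonempty :=
  nonempty_iff_ne_empty.2 fun h => hJ (h ▸ countable_empty)

lemma exists_ne_of_not_countable {J : Set ι} (hJ : ¬J.Countable) (i : ι) : ∃ j ∈ J, j ≠ i := by
  by_contra! h
  exact hJ ((countable_singleton i).mono h)

lemma exists_fin_range_eq {s : Set α} (hs : s.Finite) : ∃ e : Fin s.ncard → α, range e = s := by
  obtain ⟨m, e, he, rfl⟩ := hs.fin_param
  rw [ncard_range_of_injective he, Nat.card_eq_fintype_card, Fintype.card_fin]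
  exact ⟨e, rfl⟩

lemma exists_not_countable_fiber {β : Type*} [Countable β] {J : Set ι} (hJ : ¬J.Countable)
    (g : ι → β) : ∃ b, ¬{i ∈ J | g i = b}.Countable := by
  by_contra! h
  refine hJ ((countable_iUnion h).mono fun i hi => ?_)
  exact mem_iUnion.2 ⟨g i, hi, rfl⟩

lemma exists_not_countable_pairwiseDisjoint {s : ι → Set α} {J : Set ι}
    (hfin : ∀ i ∈ J, (s i).Finite) (hpt : ∀ a, {i ∈ J | a ∈ s i}.Countable)
    (hJ : ¬J.Countable) : ∃ K ⊆ J, ¬K.Countable ∧ K.PairwiseDisjoint s := by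
  obtain ⟨K, hK⟩ := zorn_subset {K : Set ι | K ⊆ J ∧ K.PairwiseDisjoint s}
    fun c hc hchain => ⟨⋃₀ c, ⟨sUnion_subset fun K hK => (hc hK).1,
      (pairwiseDisjoint_sUnion hchain.directedOn).2 fun K hK => (hc hK).2⟩,
      fun _ => subset_sUnion_of_mem⟩
  refine ⟨K, hK.prop.1, fun hKc => hJ ?_, hK.prop.2⟩
  have hcover : J ⊆ K ∪ ⋃ a ∈ ⋃ k ∈ K, s k, {i ∈ J | a ∈ s i} := by
    intro i hi
    by_cases hiK : i ∈ K
    · exact Or.inl hiK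
    have hins : ¬(insert i K).PairwiseDisjoint s := fun h =>
      hiK (hK.mem_of_prop_insert ⟨insert_subset hi hK.prop.1, h⟩)
    rw [pairwiseDisjoint_insert] at hins
    push Not at hins
    obtain ⟨k, hk, -, hik⟩ := hins hK.prop.2
    obtain ⟨a, hai, hak⟩ := not_disjoint_iff.1 hik
    exact Or.inr (mem_biUnion (mem_biUnion hk hak) ⟨hi, hai⟩)
  exact (hKc.union ((hKc.biUnion fun k hk => (hfin k (hK.prop.1 hk)).countable).biUnion
    fun a _ => hpt a)).mono hcover

theorem exists_not_countable_deltaSystem_of_encard_le (n : ℕ) {s : ι → Set α} {J : Set ι}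
    (hs : ∀ i ∈ J, (s i).encard ≤ n) (hJ : ¬J.Countable) :
    ∃ J' ⊆ J, ¬J'.Countable ∧ ∃ R, J'.Pairwise fun i j => s i ∩ s j = R := by
  induction n generalizing s J with
  | zero =>
    refine ⟨J, subset_rfl, hJ, ∅, fun i hi j _ _ => ?_⟩
    simp [encard_eq_zero.1 (nonpos_iff_eq_zero.1 (hs i hi))]
  | succ n ih =>
    by_cases hpop : ∃ a, ¬{i ∈ J | a ∈ s i}.Countable
    · obtain ⟨a, ha⟩ := hpop
      obtain ⟨J', hJ'sub, hJ', R, hR⟩ := ih (s := fun i => s i \ {a}) (fun i hi => by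
        have := hs i hi.1
        rw [← encard_sdiff_singleton_add_one hi.2, Nat.cast_succ] at this
        exact (ENat.add_le_add_iff_right ENat.one_ne_top).1 this) ha
      refine ⟨J', hJ'sub.trans (sep_subset _ _), hJ', insert a R, fun i hi j hj hij => ?_⟩
      rw [← hR hi hj hij]
      have hai := (hJ'sub hi).2
      have haj := (hJ'sub hj).2
      ext t
      by_cases hta : t = a <;> simp_all
    · push Not at hpop
      obtain ⟨K, hKJ, hK, hdisj⟩ := exists_not_countable_pairwiseDisjoint
        (fun i hi => finite_of_encard_le_coe (hs i hi)) hpop hJ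
      exact ⟨K, hKJ, hK, ∅, fun i hi j hj hij => (hdisj hi hj hij).inter_eq⟩

theorem exists_not_countable_deltaSystem {s : ι → Set α} {J : Set ι}
    (hfin : ∀ i ∈ J, (s i).Finite) (hJ : ¬J.Countable) :
    ∃ J' ⊆ J, ¬J'.Countable ∧ ∃ R, J'.Pairwise fun i j => s i ∩ s j = R := by
  obtain ⟨n, hn⟩ := exists_not_countable_fiber hJ fun i => (s i).ncard
  obtain ⟨J', hJ'sub, hJ'⟩ := exists_not_countable_deltaSystem_of_encard_le n
    (fun i hi => by rw [← hi.2, (hfin i hi.1).cast_ncard_eq]) hn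
  exact ⟨J', hJ'sub.trans (sep_subset _ _), hJ'⟩

end DeltaSystem

lemma isEmpty_principalSeg_of_countable {α β : Type*} {r : α → α → Prop} {s : β → β → Prop}
    [Uncountable α] (hs : ∀ b, {b' | s b' b}.Countable) : IsEmpty (PrincipalSeg r s) :=
  ⟨fun f => not_countable_univ_iff.2 ‹_›
    (((hs f.top).preimage f.injective).mono fun a _ => f.lt_top a)⟩

theorem nonempty_relIso_of_countable_initialSegments {α β : Type*} {r : α → α → Prop}
    {s : β → β → Prop} [IsWellOrder α r] [IsWellOrder β s] [Uncountable α] [Uncountable β]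
    (hr : ∀ a, {a' | r a' a}.Countable) (hs : ∀ b, {b' | s b' b}.Countable) :
    Nonempty (r ≃r s) := by
  rcases InitialSeg.total r s with f | f
  · rcases f.principalSumRelIso with g | g
    · exact (isEmpty_principalSeg_of_countable hs).elim g
    · exact ⟨g⟩
  · rcases f.principalSumRelIso with g | g
    · exact (isEmpty_principalSeg_of_countable hr).elim g
    · exact ⟨g.symm⟩

section Chain

variable {T : Type*} [PartialOrder T]

theorem exists_isChain_not_countable_of_pairwise_lt
    (hlin : ∀ t : T, IsChain (· ≤ ·) (Iio t)) (hpred : ∀ t : T, (Iio t).Countable)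
    {ι : Type*} [Uncountable ι] {n : ℕ} (e : ι → Fin n → T) (hinj : ∀ a, Injective (e · a))
    (hcomp : Pairwise fun i j => ∃ a b, e i a < e j b ∨ e j b < e i a) :
    ∃ c ⊆ ⋃ i, range (e i), IsChain (· ≤ ·) c ∧ ¬c.Countable := by
  have : (Filter.cocountable : Filter ι).NeBot := ⟨fun h => not_countable_univ_iff.2 ‹_›
    (compl_empty (α := ι) ▸ Filter.mem_cocountable.1 (h ▸ Filter.mem_bot))⟩
  let 𝒰 := Ultrafilter.of (Filter.cocountable : Filter ι)
  have hU : ∀ s : Set ι, sᶜ.Countable → ∀ᶠ j in 𝒰, j ∈ s := fun s hs =>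
    Ultrafilter.of_le _ (Filter.mem_cocountable.2 hs)
  have hpos : ∀ i, ∃ p : Fin n × Fin n, ∀ᶠ j in 𝒰, e i p.1 < e j p.2 := by
    intro i
    have hbelow : {j | ∃ a b, e j b < e i a}.Countable := by
      have : {j | ∃ a b, e j b < e i a} = ⋃ a, ⋃ b, (e · b) ⁻¹' Iio (e i a) := by
        ext j; simp
      rw [this]
      exact countable_iUnion fun a => countable_iUnion fun b => (hpred _).preimage (hinj b)
    refine Ultrafilter.eventually_exists_iff.1 ?_
    filter_upwards [hU ({i} ∪ {j | ∃ a b, e j b < e i a})ᶜ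
      (by simpa using (countable_singleton i).union hbelow)] with j hj
    simp only [mem_compl_iff, mem_union, mem_singleton_iff, mem_ofPred_eq, not_or] at hj
    obtain ⟨a, b, hab | hba⟩ := hcomp (Ne.symm hj.1)
    · exact ⟨(a, b), hab⟩
    · exact absurd ⟨a, b, hba⟩ hj.2
  choose p hp using hpos
  obtain ⟨q, hq⟩ := exists_not_countable_fiber (not_countable_univ_iff.2 ‹_›) p
  refine ⟨(e · q.1) '' {i | p i = q}, ?_, ?_, ?_⟩
  · rintro _ ⟨i, -, rfl⟩
    exact mem_iUnion_of_mem i (mem_range_self _)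
  · rintro _ ⟨i, hi : p i = q, rfl⟩ _ ⟨i', hi' : p i' = q, rfl⟩ hne
    -- both lie below a common `e j q.2`, whose predecessors form a chain
    obtain ⟨j, hij, hi'j⟩ := ((hp i).and (hp i')).exists
    rw [hi] at hij
    rw [hi'] at hi'j
    exact hlin _ hij hi'j hne
  · exact fun hc => hq (countable_of_injective_of_countable_image
      ((hinj q.1).injOn) (by simpa using hc))

end Chain

namespace Tw1

variable {T : Type*} [PartialOrder T] {A : Set T}

def domain (f : T → Option ℕ) : Set T := {t | f t ≠ none}

lemma compat_of_forall {f g : T → Option ℕ} (hf : f ∈ Pcond A) (hg : g ∈ Pcond A)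
    (hagree : ∀ t ∈ domain f ∩ domain g, f t = g t)
    (hcross : ∀ u ∈ domain f \ domain g, ∀ v ∈ domain g \ domain f, u < v ∨ v < u →
      f u ≠ g v) :
    Compat A f g := by
  set h : T → Option ℕ := fun t => (f t).orElse fun _ => g t
  have hfh : ∀ t, f t ≠ none → h t = f t := fun t ht => by
    obtain ⟨a, ha⟩ := Option.ne_none_iff_exists'.1 ht
    simp [h, ha]
  have hgh : ∀ t, g t ≠ none → h t = g t := fun t ht => by
    by_cases hft : f t = none
    · simp [h, hft]
    · exact (hfh t hft).trans (hagree t ⟨hft, ht⟩)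
  have hdom : ∀ t, h t ≠ none ↔ f t ≠ none ∨ g t ≠ none := fun t => by
    by_cases hft : f t = none <;> simp [h, hft]
  refine ⟨fun t hft hgt => hagree t ⟨hft, hgt⟩, ?_, ?_, ?_⟩
  · exact (hf.1.union hg.1).subset fun t ht => (hdom t).1 ht
  · exact fun t ht => ((hdom t).1 ht).elim (fun h => hf.2.1 h) (fun h => hg.2.1 h)
  intro u v huv (hu : h u ≠ none) (hv : h v ≠ none)
  show h u ≠ h v
  by_cases hf2 : f u ≠ none ∧ f v ≠ none
  · rw [hfh u hf2.1, hfh v hf2.2]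
    exact hf.2.2 u v huv hf2.1 hf2.2
  by_cases hg2 : g u ≠ none ∧ g v ≠ none
  · rw [hgh u hg2.1, hgh v hg2.2]
    exact hg.2.2 u v huv hg2.1 hg2.2
  -- one endpoint lies only in `domain f`, the other only in `domain g`
  rcases (hdom u).1 hu with hfu | hgu <;> rcases (hdom v).1 hv with hfv | hgv
  · exact absurd ⟨hfu, hfv⟩ hf2
  · rw [hfh u hfu, hgh v hgv]
    exact hcross u ⟨hfu, fun h => hg2 ⟨h, hgv⟩⟩ v ⟨hgv, fun h => hf2 ⟨hfu, h⟩⟩ (Or.inl huv)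
  · rw [hgh u hgu, hfh v hfv]
    exact (hcross v ⟨hfv, fun h => hg2 ⟨hgu, h⟩⟩ u ⟨hgu, fun h => hf2 ⟨h, hfv⟩⟩
      (Or.inr huv)).symm
  · exact absurd ⟨hgu, hgv⟩ hg2

lemma exists_not_countable_deltaSystem_of_subset_pcond {S : Set (T → Option ℕ)}
    (hS : S ⊆ Pcond A) (hSc : ¬S.Countable) :
    ∃ S' ⊆ S, ¬S'.Countable ∧ ∃ (R : Set T) (n : ℕ),
      (∀ f ∈ S', R ⊆ domain f ∧ (domain f \ R).ncard = n) ∧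
      S'.Pairwise fun f g => domain f ∩ domain g = R ∧ ∀ t ∈ R, f t = g t := by
  obtain ⟨S₁, hS₁S, hS₁, R, hR⟩ :=
    exists_not_countable_deltaSystem (s := domain) (fun f hf => (hS hf).1) hSc
  have hRdom : ∀ f ∈ S₁, R ⊆ domain f := fun f hf => by
    obtain ⟨g, hg, hgf⟩ := exists_ne_of_not_countable hS₁ f
    exact hR hf hg hgf.symm ▸ inter_subset_left
  obtain ⟨f₀, hf₀⟩ := nonempty_of_not_countable hS₁
  have : Finite R := ((hS (hS₁S hf₀)).1.subset (hRdom f₀ hf₀)).to_subtype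
  obtain ⟨⟨r, n⟩, hS₂⟩ :=
    exists_not_countable_fiber hS₁ fun f => (R.domRestrict f, (domain f \ R).ncard)
  simp only [Prod.mk.injEq] at hS₂
  refine ⟨_, (sep_subset _ _).trans hS₁S, hS₂, R, n, fun f hf => ⟨hRdom f hf.1, hf.2.2⟩,
    fun f hf g hg hfg => ⟨hR hf.1 hg.1 hfg, fun t ht => ?_⟩⟩
  exact congrFun (hf.2.1.trans hg.2.1.symm) ⟨t, ht⟩

theorem countable_of_pairwise_not_compat
    (hlin : ∀ t : T, IsChain (· ≤ ·) (Iio t)) (hpred : ∀ t : T, (Iio t).Countable)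
    (hA : ∀ c ⊆ A, IsChain (· ≤ ·) c → c.Countable) {S : Set (T → Option ℕ)}
    (hS : S ⊆ Pcond A) (hinc : S.Pairwise fun f g => ¬Compat A f g) : S.Countable := by
  by_contra hSc
  obtain ⟨S', hS'S, hS', R, n, hdom, hR⟩ :=
    exists_not_countable_deltaSystem_of_subset_pcond hS hSc
  have : Uncountable S' := (uncountable_iff_not_countable _).2 hS'
  choose e he using fun f : S' =>
    (hdom f f.2).2 ▸ exists_fin_range_eq ((hS (hS'S f.2)).1.sdiff (t := R))
  have hmem : ∀ (f : S') a, e f a ∈ domain f \ R := fun f a => he f ▸ mem_range_self a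
  obtain ⟨c, hcA, hc, hcc⟩ := exists_isChain_not_countable_of_pairwise_lt hlin hpred e
    (fun a f g (hfg : e f a = e g a) => by
      by_contra hne
      exact (hmem f a).2 ((hR f.2 g.2 (Subtype.coe_ne_coe.2 hne)).1 ▸
        ⟨(hmem f a).1, hfg ▸ (hmem g a).1⟩))
    (fun f g hne => by
      have hfg := hR f.2 g.2 (Subtype.coe_ne_coe.2 hne)
      by_contra! hcomp
      refine hinc (hS'S f.2) (hS'S g.2) (Subtype.coe_ne_coe.2 hne) (compat_of_forall
        (hS (hS'S f.2)) (hS (hS'S g.2)) (fun t ht => hfg.2 t (hfg.1 ▸ ht))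
        fun u hu v hv huv => ?_)
      obtain ⟨a, rfl⟩ : u ∈ range (e f) := he f ▸ ⟨hu.1, fun huR => hu.2 ((hdom g g.2).1 huR)⟩
      obtain ⟨b, rfl⟩ : v ∈ range (e g) := he g ▸ ⟨hv.1, fun hvR => hv.2 ((hdom f f.2).1 hvR)⟩
      exact absurd huv (not_or.2 (hcomp a b)))
  refine hcc (hA c (hcA.trans (iUnion_subset fun f => ?_)) hc)
  rw [he f]
  exact sdiff_subset.trans (hS (hS'S f.2)).2.1

instance : WellFoundedLT Iw1 := inferInstanceAs (WellFoundedLT (Iio (Cardinal.aleph.{0} 1).ord))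

lemma Iw1.countable_Iio (k : Iw1) : (Iio k).Countable := by
  have hk : (k.1 : Ordinal).card < Cardinal.aleph 1 := Cardinal.lt_ord.1 k.2
  have : (Iio k.1).Countable := by
    rw [← Cardinal.le_aleph0_iff_set_countable, Cardinal.mk_Iio_ordinal, Cardinal.lift_le_aleph0]
    exact Cardinal.lt_aleph_one_iff.1 hk
  exact this.preimage Subtype.val_injective

instance : Uncountable Iw1 := by
  rw [← Cardinal.aleph0_lt_mk_iff]
  show Cardinal.aleph0 < Cardinal.mk (Iio (Cardinal.aleph.{0} 1).ord)
  simp [Cardinal.mk_Iio_ordinal]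

lemma IsTree.wellFoundedLT (htree : IsTree T) : WellFoundedLT T :=
  ⟨WellFounded.wellFounded_iff_has_min.2 fun S ⟨t, ht⟩ => by
    by_cases h : ∃ s ∈ S, s < t
    · obtain ⟨m, ⟨hmS, hmt⟩, hmin⟩ :=
        (htree t).2.2 {s ∈ S | s < t} (fun s hs => hs.2) (let ⟨s, hs, hst⟩ := h; ⟨s, hs, hst⟩)
      exact ⟨m, hmS, fun s hs hsm => (hmin s ⟨hs, hsm.trans hmt⟩).not_gt hsm⟩
    · push Not at h
      exact ⟨t, ht, fun s hs => h s hs⟩⟩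

lemma IsTree.isOmega1Branch (htree : IsTree T) {M : Set T} (hM : IsMaxChain (· ≤ ·) M)
    (hMc : ¬M.Countable) : IsOmega1Branch M := by
  have := htree.wellFoundedLT
  have : Uncountable M := (uncountable_iff_not_countable _).2 hMc
  have : Std.Trichotomous ((· < ·) : M → M → Prop) :=
    isChain_univ_iff.1 fun a _ b _ hab => (hM.1 a.2 b.2 (Subtype.coe_ne_coe.2 hab)).imp
      (lt_of_le_of_ne · hab) (lt_of_le_of_ne · (Ne.symm hab))
  have : IsWellOrder M (· < ·) := {}
  obtain ⟨g⟩ := nonempty_relIso_of_countable_initialSegments (r := ((· < ·) : Iw1 → Iw1 → Prop))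
    (s := ((· < ·) : M → M → Prop)) Iw1.countable_Iio
    (fun t => (htree t).2.1.preimage Subtype.val_injective)
  exact ⟨hM, ⟨OrderIso.ofRelIsoLT g⟩⟩

lemma countable_of_isChain_subset_range (htree : IsTree T) {Bf : Iw1 → Set T}
    (hall : ∀ B, IsOmega1Branch B → ∃ i, Bf i = B) {x : Iw1 → T}
    (hx : ∀ j, x j ∈ Bseg Bf j) {c : Set T} (hcx : c ⊆ range x) (hc : IsChain (· ≤ ·) c) :
    c.Countable := by
  by_contra hcc
  obtain ⟨M, hM, hcM⟩ := hc.exists_maxChain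
  obtain ⟨k, rfl⟩ := hall M (htree.isOmega1Branch hM fun h => hcc (h.mono hcM))
  have : c ⊆ x '' insert k (Iio k) := by
    rintro _ hj
    obtain ⟨j, rfl⟩ := hcx hj
    exact ⟨j, le_iff_eq_or_lt.1 (not_lt.1 fun hkj => (hx j).2 (mem_iUnion₂.2 ⟨k, hkj, hcM hj⟩)),
      rfl⟩
  exact hcc ((((Iw1.countable_Iio k).insert k).image x).mono this)

end Tw1

theorem stmt15_general {T : Type*} [PartialOrder T]
    (htree : Tw1.IsTree T)
    (Bf : Tw1.Iw1 → Set T)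
    (hall : ∀ B : Set T, Tw1.IsOmega1Branch B → ∃ i, Bf i = B)
    (x : Tw1.Iw1 → T)
    (hx : ∀ j, x j ∈ Tw1.Bseg Bf j ∧ ∀ y ∈ Tw1.Bseg Bf j, x j ≤ y) :
    ∀ S : Set (T → Option ℕ), S ⊆ Tw1.Pcond (Set.range x) →
      (∀ f ∈ S, ∀ g ∈ S, f ≠ g → ¬ Tw1.Compat (Set.range x) f g) →
      S.Countable := fun _ hS hinc =>
  Tw1.countable_of_pairwise_not_compat (fun t _ ha _ hb _ => (htree t).1 _ _ ha hb)
    (fun t => (htree t).2.1)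
    (fun _ hcx hc => Tw1.countable_of_isChain_subset_range htree hall (fun j => (hx j).1) hcx hc)
    hS hinc

/-- (ccc of the sealing forcing.)  With `x_j = min B'_j` and `A = {x_j : j < ω₁}`,
the partial order `P'_T` of finite partial functions `f : A → ω` with
`f(x) ≠ f(y)` for comparable `x < y` in the domain satisfies the countable
chain condition: every pairwise incompatible set of conditions is countable. -/
theorem stmt15 {T : Type*} [PartialOrder T]
    (htree : Tw1.IsTree T)
    (hcover : ∀ t : T, ∃ B : Set T, Tw1.IsOmega1Branch B ∧ t ∈ B)
    (Bf : Tw1.Iw1 → Set T)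
    (hbr : ∀ i, Tw1.IsOmega1Branch (Bf i))
    (hinj : Function.Injective Bf)
    (hall : ∀ B : Set T, Tw1.IsOmega1Branch B → ∃ i, Bf i = B)
    (x : Tw1.Iw1 → T)
    (hx : ∀ j, x j ∈ Tw1.Bseg Bf j ∧ ∀ y ∈ Tw1.Bseg Bf j, x j ≤ y) :
    ∀ S : Set (T → Option ℕ), S ⊆ Tw1.Pcond (Set.range x) →
      (∀ f ∈ S, ∀ g ∈ S, f ≠ g → ¬ Tw1.Compat (Set.range x) f g) →
      S.Countable :=
  stmt15_general htree Bf hall x hx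
end

section
/- Let f : A → ω be such that f(x) ≠ f(y) whenever x < y are both elements of A, and define g : T → ω by g(y) = f(x_j) for the unique j < ω₁ with y ∈ B'_j. Then for all s < t in T with g(s) = g(t) there is a unique α < ω₁ such that both s and t belong to B'_α. -/
/-- With `x_j = min B'_j` and `A = {x_j : j < ω₁}`: if `f : A → ω` takes
different values on comparable elements of `A`, and `g : T → ω` is defined by
`g(y) = f(x_j)` for the unique `j` with `y ∈ B'_j`, then whenever `s < t` and
`g(s) = g(t)` there is a unique `α < ω₁` with `s, t ∈ B'_α`. -/
theorem stmt16 {T : Type*} [PartialOrder T]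
    (htree : Tw1.IsTree T)
    (hcover : ∀ t : T, ∃ B : Set T, Tw1.IsOmega1Branch B ∧ t ∈ B)
    (Bf : Tw1.Iw1 → Set T)
    (hbr : ∀ i, Tw1.IsOmega1Branch (Bf i))
    (hinj : Function.Injective Bf)
    (hall : ∀ B : Set T, Tw1.IsOmega1Branch B → ∃ i, Bf i = B)
    (x : Tw1.Iw1 → T)
    (hx : ∀ j, x j ∈ Tw1.Bseg Bf j ∧ ∀ y ∈ Tw1.Bseg Bf j, x j ≤ y)
    (f : T → ℕ)
    (hf : ∀ a b : T, a ∈ Set.range x → b ∈ Set.range x → a < b → f a ≠ f b)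
    (g : T → ℕ)
    (hg : ∀ j, ∀ y ∈ Tw1.Bseg Bf j, g y = f (x j)) :
    ∀ s t : T, s < t → g s = g t →
      ∃! α : Tw1.Iw1, s ∈ Tw1.Bseg Bf α ∧ t ∈ Tw1.Bseg Bf α := by
  have hwf : WellFoundedLT Tw1.Iw1 := by unfold Tw1.Iw1; infer_instance
  -- disjointness of segments
  have disj : ∀ (y : T) (i j : Tw1.Iw1),
      y ∈ Tw1.Bseg Bf i → y ∈ Tw1.Bseg Bf j → i = j := by
    intro y i j hi hj
    by_contra hne
    rcases lt_or_gt_of_ne hne with h | h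
    · exact hj.2 (Set.mem_biUnion h hi.1)
    · exact hi.2 (Set.mem_biUnion h hj.1)
  -- every element lies in some segment
  have hexist : ∀ y : T, ∃ i, y ∈ Tw1.Bseg Bf i := by
    intro y
    obtain ⟨B, hB, hyB⟩ := hcover y
    obtain ⟨i0, rfl⟩ := hall B hB
    have hne : {i : Tw1.Iw1 | y ∈ Bf i}.Nonempty := ⟨i0, hyB⟩
    obtain ⟨m, hm, hmin⟩ := hwf.wf.has_min _ hne
    refine ⟨m, hm, ?_⟩
    intro hmem
    simp only [Set.mem_iUnion] at hmem
    obtain ⟨k, hk, hyk⟩ := hmem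
    exact hmin k hyk hk
  intro s t hst hgst
  obtain ⟨α, hsα⟩ := hexist s
  obtain ⟨β, htβ⟩ := hexist t
  have hxαs : x α ≤ s := (hx α).2 s hsα
  have hxβt : x β ≤ t := (hx β).2 t htβ
  have hfeq : f (x α) = f (x β) := by
    rw [← hg α s hsα, ← hg β t htβ]; exact hgst
  have hxeq : x α = x β := by
    by_contra hne
    have hxαt : x α < t := lt_of_le_of_lt hxαs hst
    rcases eq_or_lt_of_le hxβt with heq | hlt
    · exact hf (x α) (x β) ⟨α, rfl⟩ ⟨β, rfl⟩ (heq ▸ hxαt) hfeq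
    · rcases (htree t).1 (x α) (x β) hxαt hlt with h | h
      · exact hf (x α) (x β) ⟨α, rfl⟩ ⟨β, rfl⟩ (lt_of_le_of_ne h hne) hfeq
      · exact hf (x β) (x α) ⟨β, rfl⟩ ⟨α, rfl⟩
          (lt_of_le_of_ne h (Ne.symm hne)) hfeq.symm
  have hαβ : α = β := disj (x α) α β (hx α).1 (hxeq ▸ (hx β).1)
  refine ⟨α, ⟨hsα, hαβ ▸ htβ⟩, ?_⟩
  intro γ ⟨hsγ, _⟩
  exact disj s γ α hsγ hsα
end
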